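/- arXiv:math/0501274 — 8 statements merged into one kernel-verified Lean document; each statement's English description precedes it below -/
import Mathlib

section
/- Let μ and ν be Borel probability measures on ℝ, with distribution functions F(x) = μ((−∞, x]) and G(x) = ν((−∞, x]). Let s = sup{y ∈ ℝ : (μ + ν)((−∞, y)) ≤ 1} (this supremum is over a nonempty set of reals and is finite). Then for every z ∈ ℝ, the measure (μ + ν) restricted to the open interval (−∞, s) plus (1 − (μ + ν)((−∞, s))) times the Dirac mass at s assigns to (−∞, z] the value min(F(z) + G(z), 1); in particular this measure is a probability measure whose distribution function is x ↦ min(F(x) + G(x), 1). -/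
open Filter Topology MeasureTheory

theorem freeLowerExtremalConvolution_distributionFunction
    (μ ν : Measure ℝ) [IsProbabilityMeasure μ] [IsProbabilityMeasure ν]
    (F G : ℝ → ℝ)
    (hF : ∀ x, F x = (μ (Set.Iic x)).toReal)
    (hG : ∀ x, G x = (ν (Set.Iic x)).toReal)
    (S : Set ℝ) (hS : S = {y : ℝ | (μ + ν) (Set.Iio y) ≤ 1}) :
    S.Nonempty ∧ BddAbove S ∧
    ∀ s : ℝ, s = sSup S →
      ∀ ρ : Measure ℝ,
        ρ = (μ + ν).restrict (Set.Iio s)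
            + ((1 : ENNReal) - (μ + ν) (Set.Iio s)) • Measure.dirac s →
        (∀ z : ℝ, ρ (Set.Iic z) = ENNReal.ofReal (min (F z + G z) 1)) ∧
        IsProbabilityMeasure ρ := by
  have hτuniv : (μ + ν) Set.univ = 2 := by
    simp [Measure.add_apply, one_add_one_eq_two]
  -- Nonempty
  have hne : S.Nonempty := by
    have h2 : Tendsto (fun y => (μ + ν) (Set.Ici y)) atBot (𝓝 ((μ + ν) Set.univ)) :=
      tendsto_measure_Ici_atBot (μ + ν)
    rw [hτuniv] at h2
    have hev : ∀ᶠ y in (atBot : Filter ℝ), 1 < (μ + ν) (Set.Ici y) :=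
      h2.eventually (eventually_gt_nhds (by norm_num))
    obtain ⟨y, hy⟩ := hev.exists
    refine ⟨y, ?_⟩
    rw [hS]
    simp only [Set.mem_setOf_eq]
    by_contra h
    push_neg at h
    have hsum : (μ + ν) (Set.Iio y) + (μ + ν) (Set.Ici y) = 2 := by
      rw [← measure_union (Set.Iio_disjoint_Ici le_rfl) measurableSet_Ici,
        Set.Iio_union_Ici, hτuniv]
    have : (2 : ENNReal) < (μ + ν) (Set.Iio y) + (μ + ν) (Set.Ici y) := by
      calc (2 : ENNReal) = 1 + 1 := one_add_one_eq_two.symm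
        _ < _ := ENNReal.add_lt_add h hy
    rw [hsum] at this
    exact lt_irrefl _ this
  -- BddAbove
  have hbdd : BddAbove S := by
    have h2 : Tendsto (fun y => (μ + ν) (Set.Iic y)) atTop (𝓝 ((μ + ν) Set.univ)) :=
      tendsto_measure_Iic_atTop (μ + ν)
    rw [hτuniv] at h2
    have hev : ∀ᶠ y in (atTop : Filter ℝ), 1 < (μ + ν) (Set.Iic y) :=
      h2.eventually (eventually_gt_nhds (by norm_num))
    obtain ⟨x0, hx0⟩ := hev.exists
    refine ⟨x0, fun y hy => ?_⟩
    rw [hS] at hy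
    simp only [Set.mem_setOf_eq] at hy
    by_contra h
    push_neg at h
    have : (μ + ν) (Set.Iic x0) ≤ (μ + ν) (Set.Iio y) :=
      measure_mono (Set.Iic_subset_Iio.2 h)
    exact absurd (this.trans hy) (not_le.2 hx0)
  refine ⟨hne, hbdd, fun s hs ρ hρ => ?_⟩
  -- τ (Iio s) ≤ 1
  have hSle : ∀ y ∈ S, (μ + ν) (Set.Iio y) ≤ 1 := by
    intro y hy; rw [hS] at hy; exact hy
  have hsle : (μ + ν) (Set.Iio s) ≤ 1 := by
    have hmono : Monotone (fun n : ℕ => Set.Iio (s - 1 / (n + 1))) := by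
      intro m n hmn
      apply Set.Iio_subset_Iio
      have : (1 : ℝ) / (n + 1) ≤ 1 / (m + 1) := by
        apply one_div_le_one_div_of_le
        · positivity
        · exact_mod_cast by exact_mod_cast Nat.succ_le_succ hmn
      linarith
    have hU : (⋃ n : ℕ, Set.Iio (s - 1 / (n + 1))) = Set.Iio s := by
      ext x
      simp only [Set.mem_iUnion, Set.mem_Iio]
      constructor
      · rintro ⟨n, hn⟩
        have : (0 : ℝ) < 1 / (n + 1) := by positivity
        linarith
      · intro hx
        obtain ⟨n, hn⟩ := exists_nat_one_div_lt (show (0 : ℝ) < s - x by linarith)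
        exact ⟨n, by linarith⟩
    have ht := tendsto_measure_iUnion_atTop (μ := μ + ν) hmono
    rw [hU] at ht
    refine le_of_tendsto' ht fun n => ?_
    have hlt : s - 1 / (n + 1) < sSup S := by
      rw [← hs]
      have : (0 : ℝ) < 1 / (n + 1) := by positivity
      linarith
    obtain ⟨y, hyS, hy⟩ := exists_lt_of_lt_csSup hne hlt
    calc (μ + ν) (Set.Iio (s - 1 / (n + 1))) ≤ (μ + ν) (Set.Iio y) :=
          measure_mono (Set.Iio_subset_Iio hy.le)
      _ ≤ 1 := hSle y hyS
  -- 1 ≤ τ (Iic s)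
  have hsge : 1 ≤ (μ + ν) (Set.Iic s) := by
    have hanti : Antitone (fun n : ℕ => Set.Iio (s + 1 / (n + 1))) := by
      intro m n hmn
      apply Set.Iio_subset_Iio
      have : (1 : ℝ) / (n + 1) ≤ 1 / (m + 1) := by
        apply one_div_le_one_div_of_le
        · positivity
        · exact_mod_cast by exact_mod_cast Nat.succ_le_succ hmn
      linarith
    have hI : (⋂ n : ℕ, Set.Iio (s + 1 / (n + 1))) = Set.Iic s := by
      ext x
      simp only [Set.mem_iInter, Set.mem_Iio, Set.mem_Iic]
      constructor
      · intro h
        by_contra hc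
        push_neg at hc
        obtain ⟨n, hn⟩ := exists_nat_one_div_lt (show (0 : ℝ) < x - s by linarith)
        have := h n

        linarith
      · intro h n
        have : (0 : ℝ) < 1 / (n + 1) := by positivity
        linarith
    have ht := tendsto_measure_iInter_atTop (μ := μ + ν)
      (fun n => measurableSet_Iio.nullMeasurableSet) hanti ⟨0, measure_ne_top _ _⟩
    rw [hI] at ht
    refine ge_of_tendsto' ht fun n => ?_
    by_contra hc
    push_neg at hc
    have hmem : s + 1 / (n + 1) ∈ S := by
      rw [hS]; exact hc.le
    have h' : s + 1 / (↑n + 1) ≤ sSup S := le_csSup hbdd hmem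
    rw [← hs] at h'
    have hpos : (0 : ℝ) < 1 / (↑n + 1 : ℝ) := by positivity
    linarith
  constructor
  · intro z
    rw [hρ, Measure.add_apply, Measure.restrict_apply measurableSet_Iic,
      Measure.smul_apply, Measure.dirac_apply' _ measurableSet_Iic, smul_eq_mul]
    rcases lt_or_ge z s with hzs | hsz
    · -- z < s
      rw [Set.inter_eq_left.2 (Set.Iic_subset_Iio.2 hzs),
        Set.indicator_of_notMem (by simpa using not_le.2 hzs), mul_zero, add_zero]
      have hle1 : (μ + ν) (Set.Iic z) ≤ 1 :=
        (measure_mono (Set.Iic_subset_Iio.2 hzs)).trans hsle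
      have hFG : F z + G z ≤ 1 := by
        rw [hF, hG, ← ENNReal.toReal_add (measure_ne_top μ _) (measure_ne_top ν _)]
        have : (μ (Set.Iic z) + ν (Set.Iic z)) = (μ + ν) (Set.Iic z) :=
          (Measure.add_apply μ ν _).symm
        rw [this]
        simpa using ENNReal.toReal_mono (by norm_num) hle1
      rw [min_eq_left hFG, hF, hG,
        ENNReal.ofReal_add ENNReal.toReal_nonneg ENNReal.toReal_nonneg,
        ENNReal.ofReal_toReal (measure_ne_top μ _),
        ENNReal.ofReal_toReal (measure_ne_top ν _), Measure.add_apply]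
    · -- s ≤ z
      rw [Set.inter_eq_right.2 (Set.Iio_subset_Iic_self.trans (Set.Iic_subset_Iic.2 hsz)),
        Set.indicator_of_mem (by simpa using hsz), Pi.one_apply, mul_one,
        add_tsub_cancel_of_le hsle]
      have hge1 : 1 ≤ (μ + ν) (Set.Iic z) :=
        hsge.trans (measure_mono (Set.Iic_subset_Iic.2 hsz))
      have hFG : 1 ≤ F z + G z := by
        rw [hF, hG, ← ENNReal.toReal_add (measure_ne_top μ _) (measure_ne_top ν _)]
        have : (μ (Set.Iic z) + ν (Set.Iic z)) = (μ + ν) (Set.Iic z) :=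
          (Measure.add_apply μ ν _).symm
        rw [this]
        simpa using ENNReal.toReal_mono (measure_ne_top _ _) hge1
      rw [min_eq_right hFG, ENNReal.ofReal_one]
  · constructor
    rw [hρ, Measure.add_apply, Measure.restrict_apply_univ, Measure.smul_apply,
      measure_univ, smul_eq_mul, mul_one, add_tsub_cancel_of_le hsle]
end

section
/- Let G be a nondegenerate distribution function. Then the following are equivalent: (i) G is freely max-stable; (ii) there exists a distribution function F that lies in the free max-domain of attraction of G; (iii) G lies in the free max-domain of attraction of G. -/
open Filter Topology

def IsDistFun (F : ℝ → ℝ) : Prop :=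
  Monotone F ∧ (∀ x, ContinuousWithinAt F (Set.Ici x) x) ∧
    Tendsto F atBot (𝓝 0) ∧ Tendsto F atTop (𝓝 1)

noncomputable def freePow (F : ℝ → ℝ) (n : ℕ) (x : ℝ) : ℝ :=
  max ((n : ℝ) * F x - ((n : ℝ) - 1)) 0

def FreelyMaxStable (F : ℝ → ℝ) : Prop :=
  ∀ n : ℕ, 1 ≤ n → ∃ a b : ℝ, 0 < a ∧ ∀ x : ℝ, freePow F n (a * x + b) = F x

def FreeDomAttr (F G : ℝ → ℝ) : Prop :=
  ∃ a b : ℕ → ℝ, (∀ n, 0 < a n) ∧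
    ∀ x : ℝ, ContinuousAt G x →
      Tendsto (fun n => freePow F n (a n * x + b n)) atTop (𝓝 (G x))

/-!
(i) ⇒ (iii) ⇒ (ii) are immediate. For (ii) ⇒ (i), write `G^{⊡t}(x) = max (1 - t (1 - G x)) 0`
for real `t ≥ 1`. If `F^{⊡n}(aₙ x + bₙ) → G x`, the semigroup law
`F^{⊡⌈tn⌉} = (F^{⊡n})^{⊡⌈tn⌉/n}` gives `F^{⊡⌈tn⌉}(aₙ x + bₙ) → G^{⊡t}(x)`, while along the
subsequence `⌈tn⌉` the normalisation `a_{⌈tn⌉}, b_{⌈tn⌉}` still gives the limit `G`. By the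
convergence of types (the affine changes of variable between the two normalisations stay in a
compact set, and any limit point identifies the two limits), `G^{⊡t}` is an affine rescaling of `G`
whenever it is nondegenerate. For `t` close to `1` this forces `G` to take values arbitrarily close
to `1`, so `G^{⊡k}` is nondegenerate for every integer `k ≥ 1`, and the same argument makes `G`
freely max-stable.
-/

open Set

lemma Dense.nhdsWithin_inter_Ioi_neBot {D : Set ℝ} (hD : Dense D) (x : ℝ) :
    (𝓝[D ∩ Ioi x] x).NeBot := by
  refine mem_closure_iff_nhdsWithin_neBot.1 ?_
  have h := closure_mono (inter_comm D (Ioi x) ▸ hD.open_subset_closure_inter isOpen_Ioi)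
  rw [closure_closure, closure_Ioi] at h
  exact h self_mem_Ici

lemma Dense.nhdsWithin_inter_Iio_neBot {D : Set ℝ} (hD : Dense D) (x : ℝ) :
    (𝓝[D ∩ Iio x] x).NeBot := by
  refine mem_closure_iff_nhdsWithin_neBot.1 ?_
  have h := closure_mono (inter_comm D (Iio x) ▸ hD.open_subset_closure_inter isOpen_Iio)
  rw [closure_closure, closure_Iio] at h
  exact h self_mem_Iic

lemma eq_of_eqOn_dense_of_continuousWithinAt_Ici {f g : ℝ → ℝ} {D : Set ℝ} (hD : Dense D)
    (hf : ∀ x, ContinuousWithinAt f (Ici x) x) (hg : ∀ x, ContinuousWithinAt g (Ici x) x)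
    (hfg : EqOn f g D) : f = g := by
  funext x
  have := hD.nhdsWithin_inter_Ioi_neBot x
  have hsub : D ∩ Ioi x ⊆ Ici x := fun y hy => mem_Ici.2 (le_of_lt hy.2)
  refine tendsto_nhds_unique ((hf x).mono hsub) (((hg x).mono hsub).congr' ?_)
  filter_upwards [self_mem_nhdsWithin] with y hy using (hfg hy.1).symm

lemma ContinuousAt.eq_of_forall_dense_le_ge {f : ℝ → ℝ} {D : Set ℝ} {τ v : ℝ}
    (hf : ContinuousAt f τ) (hD : Dense D)
    (hlt : ∀ s ∈ D, s < τ → f s ≤ v) (hgt : ∀ t ∈ D, τ < t → v ≤ f t) : f τ = v := by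
  have := hD.nhdsWithin_inter_Iio_neBot τ
  have := hD.nhdsWithin_inter_Ioi_neBot τ
  refine le_antisymm (le_of_tendsto (hf.mono_left (nhdsWithin_le_nhds (s := D ∩ Iio τ))) ?_)
    (ge_of_tendsto (hf.mono_left (nhdsWithin_le_nhds (s := D ∩ Ioi τ))) ?_)
  · exact eventually_nhdsWithin_of_forall fun s hs => hlt s hs.1 hs.2
  · exact eventually_nhdsWithin_of_forall fun t ht => hgt t ht.1 ht.2

lemma Monotone.dense_setOf_continuousAt {f : ℝ → ℝ} (hf : Monotone f) :
    Dense {x | ContinuousAt f x} := by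
  simpa only [compl_ofPred, not_not] using hf.countable_not_continuousAt.dense_compl ℝ

lemma Monotone.exists_continuousAt_mem_Ioo {f : ℝ → ℝ} (hf : Monotone f) {u v : ℝ} (h : u < v) :
    ∃ x ∈ Ioo u v, ContinuousAt f x := by
  obtain ⟨x, hx, hux, hxv⟩ := hf.dense_setOf_continuousAt.exists_between h
  exact ⟨x, ⟨hux, hxv⟩, hx⟩

section MonotoneFamily

variable {ι : Type*} {l : Filter ι} {U : ι → ℝ → ℝ} {s t : ι → ℝ} {α β : ℝ}

lemma eventually_lt_of_tendsto_apply (hU : ∀ i, Monotone (U i))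
    (hs : Tendsto (fun i => U i (s i)) l (𝓝 α)) (ht : Tendsto (fun i => U i (t i)) l (𝓝 β))
    (hαβ : α < β) : ∀ᶠ i in l, s i < t i :=
  (hs.eventually_lt ht hαβ).mono fun i h => (hU i).reflect_lt h

lemma le_of_tendsto_apply [l.NeBot] (hU : ∀ i, Monotone (U i)) {σ τ : ℝ}
    (hs : Tendsto s l (𝓝 σ)) (ht : Tendsto t l (𝓝 τ)) (hστ : σ < τ)
    (hα : Tendsto (fun i => U i (s i)) l (𝓝 α)) (hβ : Tendsto (fun i => U i (t i)) l (𝓝 β)) :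
    α ≤ β :=
  le_of_tendsto_of_tendsto hα hβ ((hs.eventually_lt ht hστ).mono fun i h => hU i h.le)

end MonotoneFamily

namespace IsDistFun

variable {G H : ℝ → ℝ}

lemma exists_continuousAt_lt (hG : IsDistFun G) (hH : Monotone H) {ε : ℝ} (hε : 0 < ε) :
    ∃ x, ContinuousAt H x ∧ G x < ε := by
  obtain ⟨y, hy⟩ := (hG.2.2.1.eventually (eventually_lt_nhds hε)).exists
  obtain ⟨x, hx, hcx⟩ := hH.exists_continuousAt_mem_Ioo (sub_one_lt y)
  exact ⟨x, hcx, (hG.1 hx.2.le).trans_lt hy⟩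

lemma exists_continuousAt_gt (hG : IsDistFun G) (hH : Monotone H) {q : ℝ} (hq : q < 1) :
    ∃ x, ContinuousAt H x ∧ q < G x := by
  obtain ⟨y, hy⟩ := (hG.2.2.2.eventually (eventually_gt_nhds hq)).exists
  obtain ⟨x, hx, hcx⟩ := hH.exists_continuousAt_mem_Ioo (lt_add_one y)
  exact ⟨x, hcx, hy.trans_le (hG.1 hx.1.le)⟩

lemma exists_continuousAt_pair (hG : IsDistFun G) (hH : Monotone H)
    (hnd : ∃ w, 0 < G w ∧ G w < 1) :
    ∃ z₁ z₂, z₁ < z₂ ∧ ContinuousAt H z₁ ∧ ContinuousAt H z₂ ∧ 0 < G z₁ ∧ G z₂ < 1 := by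
  obtain ⟨w, hw0, hw1⟩ := hnd
  obtain ⟨u, hwu, hu⟩ := mem_nhdsGE_iff_exists_Ico_subset.mp
    ((hG.2.1 w).eventually (eventually_lt_nhds hw1))
  obtain ⟨z₁, hz₁, hcz₁⟩ := hH.exists_continuousAt_mem_Ioo hwu
  obtain ⟨z₂, hz₂, hcz₂⟩ := hH.exists_continuousAt_mem_Ioo hz₁.2
  exact ⟨z₁, z₂, hz₂.1, hcz₁, hcz₂, hw0.trans_le (hG.1 hz₁.1.le),
    hu ⟨(hz₁.1.trans hz₂.1).le, hz₂.2⟩⟩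

end IsDistFun

lemma exists_subseq_tendsto_affine {c d : ℕ → ℝ} (hc : ∀ n, 0 < c n) {z₁ z₂ y₁ y₂ : ℝ}
    (hz : z₁ < z₂) (h₁ : ∀ᶠ n in atTop, y₁ < c n * z₁ + d n)
    (h₂ : ∀ᶠ n in atTop, c n * z₂ + d n < y₂) :
    ∃ A B : ℝ, 0 ≤ A ∧ ∃ φ : ℕ → ℕ, StrictMono φ ∧
      ∀ x, Tendsto (fun n => c (φ n) * x + d (φ n)) atTop (𝓝 (A * x + B)) := by
  set K := (y₂ - y₁) / (z₂ - z₁)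
  have hbox : ∀ᶠ n in atTop, (c n, d n) ∈ Icc 0 K ×ˢ Icc (y₁ - K * |z₁|) (y₂ + K * |z₁|) := by
    filter_upwards [h₁, h₂] with n h₁ h₂
    have hcK : c n ≤ K := by
      rw [le_div_iff₀ (sub_pos.2 hz)]
      nlinarith [hc n]
    have hcz : |c n * z₁| ≤ K * |z₁| := by
      rw [abs_mul, abs_of_pos (hc n)]
      exact mul_le_mul_of_nonneg_right hcK (abs_nonneg z₁)
    have := abs_le.mp hcz
    exact ⟨⟨(hc n).le, hcK⟩, by linarith, by nlinarith [hc n]⟩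
  obtain ⟨⟨A, B⟩, hAB, φ, hφ, hlim⟩ :=
    (isCompact_Icc.prod isCompact_Icc).tendsto_subseq' hbox.frequently
  exact ⟨A, B, hAB.1.1, φ, hφ, fun x =>
    ((continuous_fst.tendsto _).comp hlim |>.mul_const x).add
      ((continuous_snd.tendsto _).comp hlim)⟩

lemma IsDistFun.eq_comp_affine_of_forall_continuousAt {G V : ℝ → ℝ} (hG : IsDistFun G)
    (hV : ∀ x, ContinuousWithinAt V (Ici x) x) {A B : ℝ} (hA : 0 < A)
    (h : ∀ x, ContinuousAt G x → ContinuousAt G (A * x + B) → V x = G (A * x + B)) :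
    ∀ x, V x = G (A * x + B) := by
  set D := {x | ContinuousAt G x} ∩ (fun x => A * x + B) ⁻¹' {x | ContinuousAt G x}
  have hD : Dense D := by
    have hcount : {x | ContinuousAt G x}ᶜ.Countable := hG.1.countable_not_continuousAt
    have hinj : Function.Injective fun x => A * x + B := fun x y h => by
      simpa [hA.ne'] using h
    simpa only [D, compl_union, preimage_compl, compl_compl] using
      (hcount.union (hcount.preimage hinj)).dense_compl ℝ
  refine congrFun (eq_of_eqOn_dense_of_continuousWithinAt_Ici hD hV (fun x => ?_)
    fun x hx => h x hx.1 hx.2)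
  refine (hG.2.1 (A * x + B)).comp (f := fun y => A * y + B) (by fun_prop) fun y hy => ?_
  exact mem_Ici.2 (by nlinarith [mem_Ici.1 hy])

theorem IsDistFun.exists_eq_comp_affine_of_tendsto {G V : ℝ → ℝ} {U : ℕ → ℝ → ℝ} {c d : ℕ → ℝ}
    (hG : IsDistFun G) (hGnd : ∃ r, 0 < G r ∧ G r < 1)
    (hV : IsDistFun V) (hVnd : ∃ w, 0 < V w ∧ V w < 1)
    (hU : ∀ n, Monotone (U n)) (hc : ∀ n, 0 < c n)
    (hUG : ∀ x, ContinuousAt G x → Tendsto (fun n => U n x) atTop (𝓝 (G x)))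
    (hUV : ∀ x, ContinuousAt G x → Tendsto (fun n => U n (c n * x + d n)) atTop (𝓝 (V x))) :
    ∃ A B : ℝ, 0 < A ∧ ∀ x, V x = G (A * x + B) := by
  obtain ⟨z₁, z₂, hz, hcz₁, hcz₂, hVz₁, hVz₂⟩ := hV.exists_continuousAt_pair hG.1 hVnd
  obtain ⟨y₁, hcy₁, hy₁⟩ := hG.exists_continuousAt_lt hG.1 hVz₁
  obtain ⟨y₂, hcy₂, hy₂⟩ := hG.exists_continuousAt_gt hG.1 hVz₂
  obtain ⟨A, B, hA, φ, hφ, hlim⟩ := exists_subseq_tendsto_affine hc hz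
    (eventually_lt_of_tendsto_apply (s := fun _ => y₁) hU (hUG y₁ hcy₁) (hUV z₁ hcz₁) hy₁)
    (eventually_lt_of_tendsto_apply (t := fun _ => y₂) hU (hUV z₂ hcz₂) (hUG y₂ hcy₂) hy₂)
  have hUφ : ∀ n, Monotone (U (φ n)) := fun n => hU (φ n)
  have hle : ∀ x, ContinuousAt G x → ∀ s, ContinuousAt G s → s < A * x + B → G s ≤ V x :=
    fun x hx s hs hsx => le_of_tendsto_apply hUφ tendsto_const_nhds (hlim x) hsx
      ((hUG s hs).comp hφ.tendsto_atTop) ((hUV x hx).comp hφ.tendsto_atTop)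
  have hge : ∀ x, ContinuousAt G x → ∀ t, ContinuousAt G t → A * x + B < t → V x ≤ G t :=
    fun x hx t ht hxt => le_of_tendsto_apply hUφ (hlim x) tendsto_const_nhds hxt
      ((hUV x hx).comp hφ.tendsto_atTop) ((hUG t ht).comp hφ.tendsto_atTop)
  -- If `A = 0`, the sandwich would make `G` jump from `0` to `1` at `B`.
  have hA : 0 < A := by
    refine hA.lt_of_ne fun hA0 => ?_
    obtain ⟨r₁, r₂, hr, hcr₁, hcr₂, hGr₁, hGr₂⟩ := hG.exists_continuousAt_pair hG.1 hGnd
    obtain ⟨x₁, hcx₁, hx₁⟩ := hV.exists_continuousAt_lt hG.1 hGr₁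
    obtain ⟨x₂, hcx₂, hx₂⟩ := hV.exists_continuousAt_gt hG.1 hGr₂
    have h₁ : B ≤ r₁ := not_lt.mp fun h =>
      (hle x₁ hcx₁ r₁ hcr₁ (by rwa [← hA0, zero_mul, zero_add])).not_gt hx₁
    have h₂ : r₂ ≤ B := not_lt.mp fun h =>
      (hge x₂ hcx₂ r₂ hcr₂ (by rwa [← hA0, zero_mul, zero_add])).not_gt hx₂
    linarith
  refine ⟨A, B, hA, hG.eq_comp_affine_of_forall_continuousAt hV.2.1 hA fun x hx hAx => ?_⟩
  exact (hAx.eq_of_forall_dense_le_ge hG.1.dense_setOf_continuousAt (hle x hx) (hge x hx)).symm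

/-- The free extremal power `F^{⊡t}` with a real exponent `t`. -/
noncomputable def freeRPow (F : ℝ → ℝ) (t x : ℝ) : ℝ :=
  max (1 - t * (1 - F x)) 0

lemma freePow_eq_freeRPow (F : ℝ → ℝ) (n : ℕ) : freePow F n = freeRPow F n := by
  funext x
  simp only [freePow, freeRPow]
  ring_nf

lemma freeRPow_freeRPow (F : ℝ → ℝ) {s t : ℝ} (hs : 1 ≤ s) :
    freeRPow (freeRPow F t) s = freeRPow F (s * t) := by
  funext x
  simp only [freeRPow]
  rcases le_total (1 - t * (1 - F x)) 0 with h | h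
  · rw [max_eq_right h, max_eq_right (by linarith), max_eq_right (by nlinarith)]
  · rw [max_eq_left h]
    ring_nf

lemma Monotone.freeRPow {F : ℝ → ℝ} (hF : Monotone F) {t : ℝ} (ht : 0 ≤ t) :
    Monotone (freeRPow F t) :=
  fun _ _ hxy => max_le_max_right 0 (by nlinarith [hF hxy])

lemma Monotone.freePow {F : ℝ → ℝ} (hF : Monotone F) (n : ℕ) : Monotone (freePow F n) :=
  freePow_eq_freeRPow F n ▸ hF.freeRPow n.cast_nonneg

lemma IsDistFun.freeRPow {G : ℝ → ℝ} (hG : IsDistFun G) {t : ℝ} (ht : 1 ≤ t) :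
    IsDistFun (freeRPow G t) := by
  have hcont : Continuous fun y : ℝ => max (1 - t * (1 - y)) 0 := by fun_prop
  refine ⟨hG.1.freeRPow (by linarith),
    fun x => hcont.continuousAt.comp_continuousWithinAt (hG.2.1 x), ?_, ?_⟩ <;>
    change Tendsto ((fun y : ℝ => max (1 - t * (1 - y)) 0) ∘ G) _ _
  · simpa [max_eq_right (by linarith : 1 - t ≤ 0)] using (hcont.tendsto 0).comp hG.2.2.1
  · simpa using (hcont.tendsto 1).comp hG.2.2.2

lemma freeRPow_pos_lt_one {G : ℝ → ℝ} {t w : ℝ} (ht : 0 < t) (hw : G w < 1)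
    (htw : t * (1 - G w) < 1) : 0 < freeRPow G t w ∧ freeRPow G t w < 1 :=
  ⟨lt_max_of_lt_left (by linarith), max_lt (by nlinarith) one_pos⟩

/-- By `F^{⊡⌈tn⌉} = (F^{⊡n})^{⊡⌈tn⌉/n}` and `⌈tn⌉/n → t`. -/
lemma tendsto_freePow_ceil_mul {F : ℝ → ℝ} {a b : ℕ → ℝ} {x g t : ℝ} (ht : 1 ≤ t)
    (hx : Tendsto (fun n => freePow F n (a n * x + b n)) atTop (𝓝 g)) :
    Tendsto (fun n : ℕ => freePow F ⌈t * n⌉₊ (a n * x + b n)) atTop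
      (𝓝 (max (1 - t * (1 - g)) 0)) := by
  have hratio : Tendsto (fun n : ℕ => (⌈t * n⌉₊ : ℝ) / n) atTop (𝓝 t) :=
    (tendsto_nat_ceil_mul_div_atTop (by linarith)).comp tendsto_natCast_atTop_atTop
  refine ((tendsto_const_nhds.sub (hratio.mul (tendsto_const_nhds.sub hx))).max
    tendsto_const_nhds).congr' ?_
  filter_upwards [eventually_ge_atTop 1] with n hn
  have hn' : (1 : ℝ) ≤ n := by exact_mod_cast hn
  have hs : 1 ≤ (⌈t * n⌉₊ : ℝ) / n := by
    rw [le_div_iff₀ (by linarith), one_mul]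
    exact (by nlinarith : (n : ℝ) ≤ t * n).trans (Nat.le_ceil _)
  rw [freePow_eq_freeRPow, freePow_eq_freeRPow, ← freeRPow, freeRPow_freeRPow F hs,
    div_mul_cancel₀ _ (by linarith)]

namespace FreeDomAttr

variable {F G : ℝ → ℝ}

theorem exists_freeRPow_eq_comp_affine (hFG : FreeDomAttr F G) (hF : Monotone F)
    (hG : IsDistFun G) (hGnd : ∃ r, 0 < G r ∧ G r < 1) {t : ℝ} (ht : 1 ≤ t)
    (htnd : ∃ w, 0 < freeRPow G t w ∧ freeRPow G t w < 1) :
    ∃ A B : ℝ, 0 < A ∧ ∀ x, freeRPow G t x = G (A * x + B) := by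
  obtain ⟨a, b, ha, hconv⟩ := hFG
  set m : ℕ → ℕ := fun n => ⌈t * n⌉₊
  have hm : Tendsto m atTop atTop := tendsto_nat_ceil_atTop.comp
    (tendsto_natCast_atTop_atTop.const_mul_atTop (by linarith))
  refine hG.exists_eq_comp_affine_of_tendsto hGnd (hG.freeRPow ht) htnd
    (U := fun n y => freePow F (m n) (a (m n) * y + b (m n)))
    (d := fun n => (b n - b (m n)) / a (m n))
    (fun n => (hF.freePow _).comp fun y y' h => by nlinarith [ha (m n)])
    (fun n => div_pos (ha n) (ha (m n))) (fun x hx => (hconv x hx).comp hm) fun x hx => ?_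
  have harg : ∀ n, a (m n) * (a n / a (m n) * x + (b n - b (m n)) / a (m n)) + b (m n) =
      a n * x + b n := fun n => by
    field_simp [(ha (m n)).ne']
    ring
  simpa only [harg, m, freeRPow] using tendsto_freePow_ceil_mul ht (hconv x hx)

/-- For `1 < t` close to `1`, `G^{⊡t}` is a rescaling of `G`, so every value `g ∈ (0, 1)` of `G`
produces the value `1 - (1 - g) / t`; iterating pushes the values of `G` towards `1`. -/
theorem exists_lt_apply_lt_one (hFG : FreeDomAttr F G) (hF : Monotone F) (hG : IsDistFun G)
    (hGnd : ∃ r, 0 < G r ∧ G r < 1) {q : ℝ} (hq : q < 1) : ∃ x, q < G x ∧ G x < 1 := by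
  obtain ⟨r, hr0, hr1⟩ := hGnd
  obtain ⟨t, ht1, htr⟩ := exists_between (one_lt_one_div (by linarith) (by linarith : 1 - G r < 1))
  have htr' : t * (1 - G r) < 1 := (lt_div_iff₀ (by linarith)).mp htr
  obtain ⟨A, B, hA, hAB⟩ := hFG.exists_freeRPow_eq_comp_affine hF hG ⟨r, hr0, hr1⟩ ht1.le
    ⟨r, freeRPow_pos_lt_one (by linarith) hr1 htr'⟩
  have step : ∀ y, 0 < G y → G y < 1 → ∃ x, 0 < G x ∧ G x < 1 ∧ t * (1 - G x) = 1 - G y := by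
    intro y hy0 hy1
    have h := hAB ((y - B) / A)
    rw [show A * ((y - B) / A) + B = y by field_simp; ring, freeRPow] at h
    have h' : 1 - t * (1 - G ((y - B) / A)) = G y := by
      rcases le_total (1 - t * (1 - G ((y - B) / A))) 0 with h0 | h0
      · rw [max_eq_right h0] at h; linarith
      · rwa [max_eq_left h0] at h
    exact ⟨(y - B) / A, by nlinarith, by nlinarith, by linarith⟩
  have iter : ∀ k : ℕ, ∃ x, 0 < G x ∧ G x < 1 ∧ t ^ k * (1 - G x) ≤ 1 - G r := by
    intro k
    induction k with
    | zero => exact ⟨r, hr0, hr1, by simp⟩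
    | succ k ih =>
      obtain ⟨y, hy0, hy1, hy⟩ := ih
      obtain ⟨x, hx0, hx1, hx⟩ := step y hy0 hy1
      exact ⟨x, hx0, hx1, by rwa [pow_succ, mul_assoc, hx]⟩
  obtain ⟨k, hk⟩ := pow_unbounded_of_one_lt ((1 - G r) / (1 - q)) ht1
  obtain ⟨x, -, hx1, hx⟩ := iter k
  rw [div_lt_iff₀ (by linarith)] at hk
  exact ⟨x, by nlinarith [pow_pos (by linarith : (0 : ℝ) < t) k], hx1⟩

theorem freelyMaxStable (hFG : FreeDomAttr F G) (hF : Monotone F) (hG : IsDistFun G)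
    (hGnd : ∃ r, 0 < G r ∧ G r < 1) : FreelyMaxStable G := by
  intro k hk
  have hk1 : (1 : ℝ) ≤ k := by exact_mod_cast hk
  have hk0 : (0 : ℝ) < 1 / k := by positivity
  obtain ⟨w, hw, hw1⟩ := hFG.exists_lt_apply_lt_one hF hG hGnd (q := 1 - 1 / k) (by linarith)
  have hkw : k * (1 - G w) < 1 := by
    rw [← lt_div_iff₀' (by linarith)]; linarith
  obtain ⟨A, B, hA, hAB⟩ := hFG.exists_freeRPow_eq_comp_affine hF hG hGnd hk1
    ⟨w, freeRPow_pos_lt_one (by linarith) hw1 hkw⟩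
  refine ⟨A⁻¹, -B / A, inv_pos.2 hA, fun x => ?_⟩
  rw [freePow_eq_freeRPow, hAB]
  congr 1
  field_simp
  ring

end FreeDomAttr

lemma FreelyMaxStable.freeDomAttr_self {G : ℝ → ℝ} (h : FreelyMaxStable G) : FreeDomAttr G G := by
  choose! a b ha hab using h
  refine ⟨fun n => a (max n 1), fun n => b (max n 1), fun n => ha _ (le_max_right n 1),
    fun x _ => tendsto_const_nhds.congr' ?_⟩
  filter_upwards [eventually_ge_atTop 1] with n hn
  rw [max_eq_left hn, hab n hn x]

theorem freelyMaxStable_iff_domAttr (G : ℝ → ℝ) (hG : IsDistFun G)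
    (hnd : ∃ x, 0 < G x ∧ G x < 1) :
    (FreelyMaxStable G ↔ ∃ F : ℝ → ℝ, IsDistFun F ∧ FreeDomAttr F G) ∧
    (FreelyMaxStable G ↔ FreeDomAttr G G) :=
  ⟨⟨fun h => ⟨G, hG, h.freeDomAttr_self⟩, fun ⟨_, hF, hFG⟩ => hFG.freelyMaxStable hF.1 hG hnd⟩,
    ⟨FreelyMaxStable.freeDomAttr_self, fun h => h.freelyMaxStable hG.1 hG hnd⟩⟩
end

section
/- Let E(x) = max(1 − exp(−x), 0). Then for every integer n ≥ 1 and every x ∈ ℝ, max(n·E(x + log n) − (n−1), 0) = E(x); that is, the exponential distribution function E is freely max-stable with normalizing constants aₙ = 1 and bₙ = log n. -/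
/-!
Shifting the argument by `log n` divides the tail `exp (-x)` of `expDF` by `n`, while the free
extremal power multiplies the tail `1 - F` by `n` (truncating at `0`); the two cancel.
-/

open Filter Topology

/-- Type I free extreme value law: the exponential distribution function. -/
noncomputable def expDF (x : ℝ) : ℝ := max (1 - Real.exp (-x)) 0

theorem max_mul_max_one_sub_div_sub {n : ℝ} (hn : 1 ≤ n) (u : ℝ) :
    max (n * max (1 - u / n) 0 - (n - 1)) 0 = max (1 - u) 0 := by
  have hn₀ : 0 < n := by linarith
  rcases le_or_gt (u / n) 1 with h | h
  · rw [max_eq_left (sub_nonneg.2 h)]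
    congr 1
    field_simp
    ring
  · have hu : n < u := (one_lt_div hn₀).mp h
    rw [max_eq_right (by linarith : 1 - u / n ≤ 0), max_eq_right (by linarith : 1 - u ≤ 0),
      mul_zero, zero_sub, max_eq_right (by linarith)]

theorem Real.exp_neg_add_log {n : ℝ} (hn : 0 < n) (x : ℝ) :
    Real.exp (-(x + Real.log n)) = Real.exp (-x) / n := by
  rw [neg_add, Real.exp_add, Real.exp_neg (Real.log n), Real.exp_log hn, div_eq_mul_inv]

theorem expDF_add_log {n : ℝ} (hn : 0 < n) (x : ℝ) :
    expDF (x + Real.log n) = max (1 - Real.exp (-x) / n) 0 := by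
  rw [expDF, Real.exp_neg_add_log hn]

/-- The exponential distribution function is freely max-stable with
normalizing constants `aₙ = 1`, `bₙ = log n`. -/
theorem expDF_freelyMaxStable :
    ∀ n : ℕ, 1 ≤ n → ∀ x : ℝ,
      freePow expDF n (1 * x + Real.log n) = expDF x := by
  intro n hn x
  have hn' : (1 : ℝ) ≤ n := by exact_mod_cast hn
  rw [freePow, one_mul, expDF_add_log (by linarith), max_mul_max_one_sub_div_sub hn', expDF]
end

section
/- Let α > 0 and let B_α be the Beta distribution function: B_α(x) = 0 for x ≤ −1, B_α(x) = 1 − |x|^α for −1 < x ≤ 0, and B_α(x) = 1 for x > 0. Then for every integer n ≥ 1 and every x ∈ ℝ, max(n·B_α(n^{−1/α}·x) − (n−1), 0) = B_α(x); that is, B_α is freely max-stable with normalizing constants aₙ = n^{−1/α} and bₙ = 0. -/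
open Filter Topology

/-- Type III free extreme value law: the Beta distribution function. -/
noncomputable def betaDF (α : ℝ) (x : ℝ) : ℝ :=
  if x ≤ -1 then 0 else if x ≤ 0 then 1 - |x| ^ α else 1

/-!
On `x ≤ 0` the Beta law is `B_α(x) = max (1 - |x| ^ α) 0`, and the free extremal power acts on
such a value by `max (1 - t / n) 0 ↦ max (1 - t) 0`. Since `|n ^ (-1/α) * x| ^ α = |x| ^ α / n`,
rescaling by `n ^ (-1/α)` is exactly undone by the `n`-th free extremal power.
-/

lemma freePow_of_eq_one {F : ℝ → ℝ} {y : ℝ} (n : ℕ) (hF : F y = 1) : freePow F n y = 1 := by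
  simp [freePow, hF]

lemma freePow_of_eq_max_one_sub_div {F : ℝ → ℝ} {n : ℕ} (hn : 1 ≤ n) {y t : ℝ}
    (hF : F y = max (1 - t / n) 0) : freePow F n y = max (1 - t) 0 := by
  have hn' : (1 : ℝ) ≤ n := by exact_mod_cast hn
  calc freePow F n y = max (max (1 - t) (1 - n)) 0 := by
        rw [freePow, hF, mul_max_of_nonneg _ _ (by positivity), ← max_sub_sub_right]
        congr 2 <;> field_simp <;> ring
    _ = max (1 - t) 0 := by rw [max_assoc, max_eq_right (by linarith : (1 : ℝ) - n ≤ 0)]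

lemma betaDF_of_nonpos {α x : ℝ} (hα : 0 ≤ α) (hx : x ≤ 0) :
    betaDF α x = max (1 - |x| ^ α) 0 := by
  unfold betaDF
  split_ifs with h
  · have : 1 ≤ |x| ^ α := Real.one_le_rpow (by rw [abs_of_nonpos hx]; linarith) hα
    exact (max_eq_right (by linarith)).symm
  · have : |x| ^ α ≤ 1 := Real.rpow_le_one (abs_nonneg x) (by rw [abs_of_nonpos hx]; linarith) hα
    exact (max_eq_left (by linarith)).symm

lemma betaDF_of_pos {α x : ℝ} (hx : 0 < x) : betaDF α x = 1 := by
  simp [betaDF, hx.not_ge, show ¬ x ≤ -1 by linarith]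

lemma abs_rpow_neg_inv_mul_rpow {α : ℝ} (hα : α ≠ 0) {n : ℝ} (hn : 0 < n) (x : ℝ) :
    |n ^ (-(1 / α)) * x| ^ α = |x| ^ α / n := by
  rw [abs_mul, abs_of_pos (Real.rpow_pos_of_pos hn _),
    Real.mul_rpow (Real.rpow_nonneg hn.le _) (abs_nonneg x), ← Real.rpow_mul hn.le,
    show -(1 / α) * α = -1 by field_simp, Real.rpow_neg_one, inv_mul_eq_div]

/-- The Beta distribution function is freely max-stable with
normalizing constants `aₙ = n^{-1/α}`, `bₙ = 0`. -/
theorem betaDF_freelyMaxStable (α : ℝ) (hα : 0 < α) :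
    ∀ n : ℕ, 1 ≤ n → ∀ x : ℝ,
      freePow (betaDF α) n ((n : ℝ) ^ (-(1 / α)) * x + 0) = betaDF α x := by
  intro n hn x
  have hc : 0 < (n : ℝ) ^ (-(1 / α)) := Real.rpow_pos_of_pos (by exact_mod_cast hn) _
  rw [add_zero]
  rcases le_or_gt x 0 with hx | hx
  · rw [betaDF_of_nonpos hα.le hx]
    apply freePow_of_eq_max_one_sub_div hn
    rw [betaDF_of_nonpos hα.le (mul_nonpos_of_nonneg_of_nonpos hc.le hx),
      abs_rpow_neg_inv_mul_rpow hα.ne' (by exact_mod_cast hn)]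
  · rw [betaDF_of_pos hx]
    exact freePow_of_eq_one n (betaDF_of_pos (mul_pos hc hx))
end

section
/- A nondegenerate distribution function G is freely max-stable if and only if there exist constants a > 0 and b ∈ ℝ such that one of the following holds for all x ∈ ℝ: G(a·x + b) = E(x) (Type I), or G(a·x + b) = P_α(x) for some α > 0 (Type II), or G(a·x + b) = B_α(x) for some α > 0 (Type III). -/
open Filter Topology

noncomputable def paretoDF (α : ℝ) (x : ℝ) : ℝ :=
  if 0 < x then max (1 - x ^ (-α)) 0 else 0

/-!
Work with the quantile of `G` in logarithmic scale, `w t = G⁻¹ (1 - e^{-t})` for `t > 0`. The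
free extremal power moves the level `1 - s` to `1 - s / n`, so free max-stability says exactly
that every shift `t ↦ t + log n` acts on `w` by an increasing affine map; composing and
cancelling, so does every shift by `log (n / m)`, and these shifts are dense in `(0, ∞)`.

If all these maps are translations, the translation length is additive and monotone in the shift,
hence linear, and monotonicity of `w` together with density forces `w` to be affine: Type I.
Otherwise the maps commute, so they share a fixed point `p`; then `w - p` has constant sign and
`log |w - p|` is affine by the same argument, so `w = p ± c e^{± t / α}`, the quantiles of
Types II and III. A distribution function being determined by its quantile, both directions of
the equivalence reduce to these computations.
-/

open Set Real

lemma IsDistFun.mem_Icc {G : ℝ → ℝ} (hG : IsDistFun G) (x : ℝ) : G x ∈ Icc 0 1 :=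
  ⟨le_of_tendsto hG.2.2.1 (eventually_atBot.2 ⟨x, fun _ hy => hG.1 hy⟩),
    ge_of_tendsto hG.2.2.2 (eventually_atTop.2 ⟨x, fun _ hy => hG.1 hy⟩)⟩

lemma IsDistFun.le_iff_sInf_le {G : ℝ → ℝ} (hG : IsDistFun G) {u : ℝ} (hu₀ : 0 < u)
    (hu₁ : u < 1) (y : ℝ) : u ≤ G y ↔ sInf {x | u ≤ G x} ≤ y := by
  obtain ⟨hmono, hrc, hbot, htop⟩ := hG
  have hne : {x | u ≤ G x}.Nonempty :=
    (htop.eventually_const_lt hu₁).exists.imp fun _ h => h.le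
  have hbdd : BddBelow {x | u ≤ G x} := by
    obtain ⟨m, hm⟩ := eventually_atBot.1 (hbot.eventually_lt_const hu₀)
    exact ⟨m, fun x hx => le_of_not_gt fun hxm => (hm x hxm.le).not_ge hx⟩
  refine ⟨fun h => csInf_le hbdd h, fun h => le_trans ?_ (hmono h)⟩
  refine ge_of_tendsto ((hrc _).mono_left (nhdsWithin_mono _ Ioi_subset_Ici_self)) ?_
  filter_upwards [self_mem_nhdsWithin] with x hx
  obtain ⟨z, hz, hzx⟩ := exists_lt_of_csInf_lt hne hx
  exact hz.trans (hmono hzx.le)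

lemma freePow_mem_Icc {F : ℝ → ℝ} (hF : ∀ x, F x ∈ Icc 0 1) (n : ℕ) (x : ℝ) :
    freePow F n x ∈ Icc 0 1 :=
  ⟨le_max_right _ _, max_le (by nlinarith [(hF x).2, n.cast_nonneg (α := ℝ)]) zero_le_one⟩

lemma exists_one_sub_exp_neg_eq {u : ℝ} (hu₀ : 0 < u) (hu₁ : u < 1) :
    ∃ t, 0 < t ∧ 1 - exp (-t) = u :=
  ⟨-log (1 - u), neg_pos.2 (log_neg (by linarith) (by linarith)), by
    rw [neg_neg, exp_log (by linarith)]; ring⟩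

lemma one_sub_exp_neg_pos {t : ℝ} (ht : 0 < t) : 0 < 1 - exp (-t) := by
  linarith [Real.exp_lt_one_iff.2 (neg_neg_of_pos ht)]

lemma eq_of_forall_one_sub_exp_neg_le_iff {a b : ℝ} (ha : a ∈ Icc 0 1) (hb : b ∈ Icc 0 1)
    (h : ∀ t, 0 < t → (1 - exp (-t) ≤ a ↔ 1 - exp (-t) ≤ b)) : a = b := by
  wlog hab : a < b generalizing a b
  · rcases (not_lt.1 hab).lt_or_eq with hba | hba
    · exact (this hb ha (fun t ht => (h t ht).symm) hba).symm
    · exact hba.symm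
  obtain ⟨t, ht, htu⟩ := exists_one_sub_exp_neg_eq (u := (a + b) / 2)
    (by linarith [ha.1]) (by linarith [hb.2])
  have := (h t ht).2 (by linarith)
  linarith

/-- `w t` is the quantile of `F` at level `1 - e^{-t}`. -/
def IsLogTailQuantile (F w : ℝ → ℝ) : Prop :=
  ∀ t, 0 < t → ∀ y, 1 - exp (-t) ≤ F y ↔ w t ≤ y

lemma IsDistFun.exists_isLogTailQuantile {G : ℝ → ℝ} (hG : IsDistFun G) :
    ∃ w, IsLogTailQuantile G w :=
  ⟨fun t => sInf {x | 1 - exp (-t) ≤ G x}, fun t ht =>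
    hG.le_iff_sInf_le (one_sub_exp_neg_pos ht) (by linarith [exp_pos (-t)])⟩

def HasAffineShift (w : ℝ → ℝ) (r : ℝ) : Prop :=
  ∃ a b : ℝ, 0 < a ∧ ∀ t, 0 < t → w (t + r) = a * w t + b

namespace IsLogTailQuantile

variable {F w : ℝ → ℝ}

lemma congr (h : IsLogTailQuantile F w) {w' : ℝ → ℝ} (hw : ∀ t, 0 < t → w t = w' t) :
    IsLogTailQuantile F w' :=
  fun t ht y => hw t ht ▸ h t ht y

lemma unique (h : IsLogTailQuantile F w) {w' : ℝ → ℝ} (h' : IsLogTailQuantile F w') {t : ℝ}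
    (ht : 0 < t) : w t = w' t :=
  le_antisymm ((h t ht _).1 ((h' t ht _).2 le_rfl)) ((h' t ht _).1 ((h t ht _).2 le_rfl))

lemma funext_of_mem_Icc {H : ℝ → ℝ} (hF : IsLogTailQuantile F w) (hH : IsLogTailQuantile H w)
    (hF01 : ∀ x, F x ∈ Icc 0 1) (hH01 : ∀ x, H x ∈ Icc 0 1) : F = H :=
  funext fun y => eq_of_forall_one_sub_exp_neg_le_iff (hF01 y) (hH01 y) fun t ht =>
    (hF t ht y).trans (hH t ht y).symm

lemma monotoneOn (h : IsLogTailQuantile F w) : MonotoneOn w (Ioi 0) := by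
  intro t ht t' ht' htt'
  refine (h t ht _).1 (le_trans ?_ ((h t' ht' _).2 le_rfl))
  linarith [exp_le_exp.2 (neg_le_neg htt')]

lemma exists_ne (h : IsLogTailQuantile F w) {x : ℝ} (hx₀ : 0 < F x) (hx₁ : F x < 1) :
    ∃ t₁ t₂, 0 < t₁ ∧ 0 < t₂ ∧ w t₁ ≠ w t₂ := by
  obtain ⟨t, ht, htx⟩ := exists_one_sub_exp_neg_eq hx₀ hx₁
  have hle : w t ≤ x := (h t ht x).1 htx.le
  have hlt : x < w (t + 1) := by
    refine lt_of_not_ge fun hle' => ?_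
    have := (h (t + 1) (by linarith) x).2 hle'
    linarith [exp_lt_exp.2 (show -(t + 1) < -t by linarith)]
  exact ⟨t, t + 1, ht, by linarith, (hle.trans_lt hlt).ne⟩

lemma comp_affine (h : IsLogTailQuantile F w) {a : ℝ} (ha : 0 < a) (b : ℝ) :
    IsLogTailQuantile (fun x => F (a * x + b)) (fun t => (w t - b) / a) := by
  intro t ht y
  rw [h t ht, div_le_iff₀ ha]
  constructor <;> intro <;> linarith

lemma freePow (h : IsLogTailQuantile F w) {n : ℕ} (hn : 1 ≤ n) :
    IsLogTailQuantile (freePow F n) (fun t => w (t + log n)) := by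
  intro t ht y
  have hn₀ : (0 : ℝ) < n := by exact_mod_cast hn
  have hlog : 0 ≤ log n := log_nonneg (by exact_mod_cast hn)
  have hexp : exp (-(t + log n)) = exp (-t) / n := by
    rw [neg_add, exp_add, exp_neg (log n), exp_log hn₀, div_eq_mul_inv]
  have key : 1 - exp (-t) / n ≤ F y ↔ n - exp (-t) ≤ n * F y := by
    rw [← mul_le_mul_iff_of_pos_left hn₀, mul_sub, mul_one, mul_div_cancel₀ _ hn₀.ne']
  rw [← h _ (by linarith) y, hexp, key, _root_.freePow, le_max_iff,
    or_iff_left (one_sub_exp_neg_pos ht).not_ge]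
  constructor <;> intro <;> linarith

lemma comp_affine_eq_iff {W D : ℝ → ℝ} (h : IsLogTailQuantile F W) (hF : ∀ x, F x ∈ Icc 0 1)
    {a : ℝ} (ha : 0 < a) (b : ℝ) (hD : IsLogTailQuantile D w) (hD01 : ∀ x, D x ∈ Icc 0 1) :
    (∀ x, F (a * x + b) = D x) ↔ ∀ t, 0 < t → W t = a * w t + b := by
  have hcomp := h.comp_affine ha b
  constructor
  · intro hab t ht
    have := (funext hab ▸ hcomp).unique hD ht
    field_simp at this
    linarith
  · intro hab
    refine congrFun (funext_of_mem_Icc (hcomp.congr fun t ht => ?_) hD (fun x => hF _) hD01)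
    rw [hab t ht]
    field_simp
    ring

lemma freelyMaxStable_iff (h : IsLogTailQuantile F w) (hF : ∀ x, F x ∈ Icc 0 1) :
    FreelyMaxStable F ↔ ∀ n : ℕ, 1 ≤ n → HasAffineShift w (log n) :=
  forall₂_congr fun n hn => exists₂_congr fun _ b => and_congr_right fun ha =>
    (h.freePow hn).comp_affine_eq_iff (freePow_mem_Icc hF n) ha b h hF

end IsLogTailQuantile

lemma expDF_mem_Icc (x : ℝ) : expDF x ∈ Icc 0 1 :=
  ⟨le_max_right _ _, max_le (by linarith [exp_pos (-x)]) zero_le_one⟩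

lemma paretoDF_mem_Icc (α x : ℝ) : paretoDF α x ∈ Icc 0 1 := by
  unfold paretoDF
  split_ifs with hx
  · exact ⟨le_max_right _ _, max_le (by linarith [rpow_nonneg hx.le (-α)]) zero_le_one⟩
  · exact ⟨le_rfl, zero_le_one⟩

lemma betaDF_mem_Icc {α : ℝ} (hα : 0 ≤ α) (x : ℝ) : betaDF α x ∈ Icc 0 1 := by
  unfold betaDF
  split_ifs with h₁ h₂
  · exact ⟨le_rfl, zero_le_one⟩
  · have : |x| ≤ 1 := abs_le.2 ⟨by linarith, by linarith⟩
    exact ⟨by linarith [rpow_le_one (abs_nonneg x) this hα],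
      by linarith [rpow_nonneg (abs_nonneg x) α]⟩
  · exact ⟨zero_le_one, le_rfl⟩

lemma isLogTailQuantile_expDF : IsLogTailQuantile expDF fun t => t := by
  intro t ht y
  rw [expDF, le_max_iff, or_iff_left (one_sub_exp_neg_pos ht).not_ge, sub_le_sub_iff_left,
    exp_le_exp, neg_le_neg_iff]

lemma isLogTailQuantile_paretoDF {α : ℝ} (hα : 0 < α) :
    IsLogTailQuantile (paretoDF α) fun t => exp (t / α) := by
  intro t ht y
  unfold paretoDF
  split_ifs with hy
  · rw [le_max_iff, or_iff_left (one_sub_exp_neg_pos ht).not_ge, sub_le_sub_iff_left,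
      rpow_def_of_pos hy, exp_le_exp, ← le_log_iff_exp_le hy, div_le_iff₀ hα]
    constructor <;> intro <;> linarith
  · exact iff_of_false (one_sub_exp_neg_pos ht).not_ge
      fun h => hy ((exp_pos _).trans_le h)

lemma isLogTailQuantile_betaDF {α : ℝ} (hα : 0 < α) :
    IsLogTailQuantile (betaDF α) fun t => -exp (-t / α) := by
  intro t ht y
  have hexp : exp (-t / α) < 1 := Real.exp_lt_one_iff.2 (div_neg_of_neg_of_pos (by linarith) hα)
  unfold betaDF
  split_ifs with h₁ h₂
  · exact iff_of_false (one_sub_exp_neg_pos ht).not_ge (by linarith)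
  · have hpow : exp (-t) = exp (-t / α) ^ α := by rw [← exp_mul, div_mul_cancel₀ _ hα.ne']
    rw [sub_le_sub_iff_left, hpow, rpow_le_rpow_iff (abs_nonneg y) (exp_pos _).le hα,
      abs_of_nonpos h₂, neg_le]
  · exact iff_of_true (by linarith [exp_pos (-t)]) (by linarith [exp_pos (-t / α)])

lemma HasAffineShift.of_eqOn_affine {w W : ℝ → ℝ} {r c d : ℝ} (h : HasAffineShift w r)
    (hr : 0 ≤ r) (hW : ∀ t, 0 < t → W t = c * w t + d) : HasAffineShift W r := by
  obtain ⟨a, b, ha, hab⟩ := h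
  refine ⟨a, c * b + d - a * d, ha, fun t ht => ?_⟩
  rw [hW _ (by linarith), hW t ht, hab t ht]
  ring

lemma hasAffineShift_id (r : ℝ) : HasAffineShift (fun t => t) r :=
  ⟨1, r, one_pos, fun t _ => by ring⟩

lemma hasAffineShift_exp_div (α r : ℝ) : HasAffineShift (fun t => exp (t / α)) r :=
  ⟨exp (r / α), 0, exp_pos _, fun t _ => by simp only [add_div, exp_add]; ring⟩

lemma hasAffineShift_neg_exp_neg_div (α r : ℝ) : HasAffineShift (fun t => -exp (-t / α)) r :=
  ⟨exp (-r / α), 0, exp_pos _, fun t _ => by simp only [neg_add, add_div, exp_add]; ring⟩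

lemma HasAffineShift.sub {W : ℝ → ℝ} {r s : ℝ} (hr : HasAffineShift W r)
    (hs : HasAffineShift W s) (hrs : r ≤ s) : HasAffineShift W (s - r) := by
  obtain ⟨a, b, ha, hab⟩ := hr
  obtain ⟨a', b', ha', hab'⟩ := hs
  refine ⟨a' / a, (b' - b) / a, by positivity, fun t ht => ?_⟩
  have := hab (t + (s - r)) (by linarith)
  rw [show t + (s - r) + r = t + s by ring, hab' t ht] at this
  field_simp
  linarith

def logNatRatios : AddSubgroup ℝ where
  carrier := {r | ∃ n m : ℕ, 0 < n ∧ 0 < m ∧ log n - log m = r}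
  add_mem' := by
    rintro _ _ ⟨n, m, hn, hm, rfl⟩ ⟨n', m', hn', hm', rfl⟩
    refine ⟨n * n', m * m', Nat.mul_pos hn hn', Nat.mul_pos hm hm', ?_⟩
    push_cast
    rw [log_mul (by positivity) (by positivity), log_mul (by positivity) (by positivity)]
    ring
  zero_mem' := ⟨1, 1, one_pos, one_pos, sub_self _⟩
  neg_mem' := by
    rintro _ ⟨n, m, hn, hm, rfl⟩
    exact ⟨m, n, hm, hn, (neg_sub _ _).symm⟩

lemma dense_logNatRatios : Dense (logNatRatios : Set ℝ) := by
  refine dense_of_exists_between fun a b hab => ?_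
  obtain ⟨q, hq₁, hq₂⟩ := exists_rat_btwn (exp_lt_exp.2 hab)
  have hq : 0 < q := by exact_mod_cast (exp_pos a).trans hq₁
  have hnum : ((q.num.toNat : ℕ) : ℝ) = q.num := by
    exact_mod_cast Int.toNat_of_nonneg (Rat.num_pos.2 hq).le
  have hlog : log q.num.toNat - log q.den = log q := by
    rw [← log_div (by rw [hnum]; exact_mod_cast (Rat.num_pos.2 hq).ne')
      (by exact_mod_cast q.den_pos.ne'), hnum, Rat.cast_def]
  refine ⟨_, ⟨q.num.toNat, q.den, by have := Rat.num_pos.2 hq; omega, q.den_pos, rfl⟩, ?_⟩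
  rw [hlog]
  exact ⟨(lt_log_iff_exp_lt (by positivity)).2 hq₁, (log_lt_iff_lt_exp (by positivity)).2 hq₂⟩

lemma hasAffineShift_of_mem_logNatRatios {W : ℝ → ℝ}
    (hW : ∀ n : ℕ, 1 ≤ n → HasAffineShift W (log n)) {r : ℝ} (hr : r ∈ logNatRatios)
    (hr₀ : 0 ≤ r) : HasAffineShift W r := by
  obtain ⟨n, m, hn, hm, rfl⟩ := hr
  exact (hW m hm).sub (hW n hn) (by linarith)

section DenseShifts

variable {Γ : AddSubgroup ℝ}

lemma natCast_mul_mem {r : ℝ} (hr : r ∈ Γ) (n : ℕ) : (n : ℝ) * r ∈ Γ := by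
  simpa only [nsmul_eq_mul] using Γ.nsmul_mem hr n

lemma map_natCast_mul_of_add {φ : ℝ → ℝ}
    (hadd : ∀ r ∈ Γ, ∀ s ∈ Γ, 0 < r → 0 < s → φ (r + s) = φ r + φ s)
    {r : ℝ} (hr : r ∈ Γ) (hr₀ : 0 < r) {n : ℕ} (hn : 1 ≤ n) : φ (n * r) = n * φ r := by
  induction n, hn using Nat.le_induction with
  | base => simp
  | succ n hn ih =>
    have hnr : 0 < (n : ℝ) * r := mul_pos (by exact_mod_cast hn) hr₀
    rw [Nat.cast_succ, add_mul, one_mul, hadd _ (natCast_mul_mem hr n) _ hr hnr hr₀, ih]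
    ring

lemma apply_mul_le_apply_mul_of_add_of_monotone {φ : ℝ → ℝ}
    (hadd : ∀ r ∈ Γ, ∀ s ∈ Γ, 0 < r → 0 < s → φ (r + s) = φ r + φ s)
    (hmono : ∀ r ∈ Γ, ∀ s ∈ Γ, 0 < r → r ≤ s → φ r ≤ φ s)
    {r s : ℝ} (hr : r ∈ Γ) (hs : s ∈ Γ) (hr₀ : 0 < r) (hs₀ : 0 < s) : φ r * s ≤ φ s * r := by
  -- compare `j * r` with `⌈j * r / s⌉ * s` and let `j → ∞`
  have hφs : 0 ≤ φ s := by
    have := hmono s hs (s + s) (Γ.add_mem hs hs) hs₀ (by linarith)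
    linarith [hadd s hs s hs hs₀ hs₀]
  by_contra! hlt
  obtain ⟨j, hj⟩ := exists_nat_gt (s * φ s / (φ r * s - φ s * r))
  have hj₀ : 0 < j := by
    have : 0 ≤ s * φ s / (φ r * s - φ s * r) := div_nonneg (by positivity) (by linarith)
    exact_mod_cast this.trans_lt hj
  set k := ⌈j * r / s⌉₊
  have hjk : (j : ℝ) * r ≤ k * s := (div_le_iff₀ hs₀).1 (Nat.le_ceil _)
  have hk : (k : ℝ) < j * r / s + 1 := Nat.ceil_lt_add_one (by positivity)
  have hk₀ : 1 ≤ k := by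
    have : (0 : ℝ) < k * s := lt_of_lt_of_le (by positivity) hjk
    exact_mod_cast (pos_of_mul_pos_left this hs₀.le)
  have hφ : (j : ℝ) * φ r ≤ k * φ s := by
    rw [← map_natCast_mul_of_add hadd hr hr₀ hj₀, ← map_natCast_mul_of_add hadd hs hs₀ hk₀]
    exact hmono _ (natCast_mul_mem hr j) _ (natCast_mul_mem hs k) (by positivity) hjk
  have hks : (k : ℝ) * φ s * s ≤ (j * r + s) * φ s := by
    have := mul_le_mul_of_nonneg_right hk.le hφs
    rw [div_add_one hs₀.ne', div_mul_eq_mul_div, le_div_iff₀ hs₀] at this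
    linarith
  rw [div_lt_iff₀ (by linarith)] at hj
  nlinarith

lemma apply_mul_eq_apply_mul_of_add_of_monotone {φ : ℝ → ℝ}
    (hadd : ∀ r ∈ Γ, ∀ s ∈ Γ, 0 < r → 0 < s → φ (r + s) = φ r + φ s)
    (hmono : ∀ r ∈ Γ, ∀ s ∈ Γ, 0 < r → r ≤ s → φ r ≤ φ s)
    {r s : ℝ} (hr : r ∈ Γ) (hs : s ∈ Γ) (hr₀ : 0 < r) (hs₀ : 0 < s) : φ r * s = φ s * r :=
  le_antisymm (apply_mul_le_apply_mul_of_add_of_monotone hadd hmono hr hs hr₀ hs₀)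
    (apply_mul_le_apply_mul_of_add_of_monotone hadd hmono hs hr hs₀ hr₀)

lemma eq_add_mul_sub_of_dense (hΓ : Dense (Γ : Set ℝ)) {f : ℝ → ℝ} (hf : MonotoneOn f (Ioi 0))
    {c : ℝ} (hshift : ∀ r ∈ Γ, 0 < r → ∀ t, 0 < t → f (t + r) = f t + c * r) {t t' : ℝ}
    (ht : 0 < t) (htt' : t < t') : f t' = f t + c * (t' - t) := by
  have hclosure : ∀ {U C : Set ℝ}, IsOpen U → IsClosed C → U ∩ Γ ⊆ C → closure U ⊆ C :=
    fun hU hC hUC => closure_minimal (fun _ hx =>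
      closure_minimal hUC hC (hΓ.open_subset_closure_inter hU hx)) hC
  have hcont : Continuous fun r => f t + c * r := by fun_prop
  have hup : t' - t ∈ {r | f t' ≤ f t + c * r} := by
    refine hclosure (isOpen_Ioi (a := t' - t)) (isClosed_le continuous_const hcont) ?_
      (by rw [closure_Ioi]; exact mem_Ici.2 le_rfl)
    rintro r ⟨hr : t' - t < r, hrΓ⟩
    show f t' ≤ f t + c * r
    rw [← hshift r hrΓ (by linarith) t ht]
    exact hf (by simp; linarith) (by simp; linarith) (by linarith)
  have hlow : t' - t ∈ {r | f t + c * r ≤ f t'} := by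
    refine hclosure (isOpen_Ioo (a := 0) (b := t' - t)) (isClosed_le hcont continuous_const) ?_
      (by rw [closure_Ioo (by linarith)]; exact right_mem_Icc.2 (by linarith))
    rintro r ⟨⟨hr₀, hr⟩, hrΓ⟩
    show f t + c * r ≤ f t'
    rw [← hshift r hrΓ hr₀ t ht]
    exact hf (by simp; linarith) (by simp; linarith) (by linarith)
  exact le_antisymm hup hlow

lemma exists_pos_mul_add_of_translate (hΓ : Dense (Γ : Set ℝ)) {f : ℝ → ℝ}
    (hf : MonotoneOn f (Ioi 0)) (hshift : ∀ r ∈ Γ, 0 < r → ∃ b, ∀ t, 0 < t → f (t + r) = f t + b)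
    {t₁ t₂ : ℝ} (ht₁ : 0 < t₁) (ht₂ : 0 < t₂) (hne : f t₁ ≠ f t₂) :
    ∃ c d, 0 < c ∧ ∀ t, 0 < t → f t = c * t + d := by
  set φ : ℝ → ℝ := fun r => f (1 + r) - f 1
  have hφ : ∀ r ∈ Γ, 0 < r → ∀ t, 0 < t → f (t + r) = f t + φ r := by
    intro r hr hr₀ t ht
    obtain ⟨b, hb⟩ := hshift r hr hr₀
    simp only [φ, hb t ht, hb 1 one_pos]
    ring
  have hadd : ∀ r ∈ Γ, ∀ s ∈ Γ, 0 < r → 0 < s → φ (r + s) = φ r + φ s := by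
    intro r _ s hs _ hs₀
    simp only [φ]
    rw [← add_assoc, hφ s hs hs₀ _ (by linarith)]
    ring
  have hmono : ∀ r ∈ Γ, ∀ s ∈ Γ, 0 < r → r ≤ s → φ r ≤ φ s := fun r _ s _ hr₀ hrs =>
    sub_le_sub_right (hf (by simp; linarith) (by simp; linarith) (by linarith)) _
  obtain ⟨r₀, hr₀Γ, hr₀, -⟩ := hΓ.exists_between zero_lt_one
  set c := φ r₀ / r₀
  have hlin : ∀ r ∈ Γ, 0 < r → ∀ t, 0 < t → f (t + r) = f t + c * r := by
    intro r hr hr' t ht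
    rw [hφ r hr hr' t ht, add_right_inj, div_mul_eq_mul_div, eq_div_iff hr₀.ne']
    exact apply_mul_eq_apply_mul_of_add_of_monotone hadd hmono hr hr₀Γ hr' hr₀
  have hcd : ∀ t, 0 < t → f t = c * t + (f 1 - c) := by
    intro t ht
    rcases lt_trichotomy t 1 with h | rfl | h
    · linarith [eq_add_mul_sub_of_dense hΓ hf hlin ht h]
    · ring
    · linarith [eq_add_mul_sub_of_dense hΓ hf hlin one_pos h]
  refine ⟨c, f 1 - c, lt_of_le_of_ne ?_ fun hc => hne ?_, hcd⟩
  · have h12 := hf (show (1 : ℝ) ∈ Ioi 0 by simp) (show (2 : ℝ) ∈ Ioi 0 by simp) one_le_two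
    rw [hcd 1 one_pos, hcd 2 two_pos] at h12
    linarith
  · rw [hcd t₁ ht₁, hcd t₂ ht₂, ← hc]
    ring

lemma exists_exp_of_scale_of_pos (hΓ : Dense (Γ : Set ℝ)) {Y : ℝ → ℝ}
    (hY : MonotoneOn Y (Ioi 0)) (hpos : ∀ t, 0 < t → 0 < Y t)
    (hshift : ∀ r ∈ Γ, 0 < r → ∃ a, 0 < a ∧ ∀ t, 0 < t → Y (t + r) = a * Y t)
    {t₁ t₂ : ℝ} (ht₁ : 0 < t₁) (ht₂ : 0 < t₂) (hne : Y t₁ ≠ Y t₂) :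
    ∃ c ρ, 0 < c ∧ 0 < ρ ∧ ∀ t, 0 < t → Y t = c * exp (ρ * t) := by
  obtain ⟨ρ, d, hρ, hlog⟩ := exists_pos_mul_add_of_translate hΓ (f := fun t => log (Y t))
    (fun t ht t' ht' htt' => log_le_log (hpos t ht) (hY ht ht' htt'))
    (fun r hr hr₀ => by
      obtain ⟨a, ha, h⟩ := hshift r hr hr₀
      exact ⟨log a, fun t ht => by rw [h t ht, log_mul ha.ne' (hpos t ht).ne', add_comm]⟩)
    ht₁ ht₂ fun h => hne (log_injOn_pos (hpos _ ht₁) (hpos _ ht₂) h)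
  refine ⟨exp d, ρ, exp_pos d, hρ, fun t ht => ?_⟩
  rw [← exp_add, add_comm, ← hlog t ht, exp_log (hpos t ht)]

lemma exists_exp_of_scale (hΓ : Dense (Γ : Set ℝ)) {Z : ℝ → ℝ} (hZ : MonotoneOn Z (Ioi 0))
    (hshift : ∀ r ∈ Γ, 0 < r → ∃ a, 0 < a ∧ ∀ t, 0 < t → Z (t + r) = a * Z t)
    {t₁ t₂ : ℝ} (ht₁ : 0 < t₁) (ht₂ : 0 < t₂) (hne : Z t₁ ≠ Z t₂) :
    ∃ c ρ, 0 < c ∧ 0 < ρ ∧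
      ((∀ t, 0 < t → Z t = c * exp (ρ * t)) ∨ ∀ t, 0 < t → Z t = -(c * exp (-(ρ * t)))) := by
  -- a shift by `r > |t - t'|` preserves signs and carries each of `t, t'` beyond the other
  have hsign : ∀ t, 0 < t → ∀ t', 0 < t' → (0 < Z t → 0 < Z t') ∧ (Z t < 0 → Z t' < 0) := by
    intro t ht t' ht'
    obtain ⟨r, hrΓ, hr⟩ := hΓ.exists_gt |t - t'|
    obtain ⟨a, ha, har⟩ := hshift r hrΓ ((abs_nonneg _).trans_lt hr)
    obtain ⟨h₁, h₂⟩ := abs_sub_lt_iff.1 hr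
    have hle₁ : Z t ≤ a * Z t' := har t' ht' ▸ hZ ht (by simp; linarith) (by linarith)
    have hle₂ : Z t' ≤ a * Z t := har t ht ▸ hZ ht' (by simp; linarith) (by linarith)
    exact ⟨fun h => pos_of_mul_pos_right (h.trans_le hle₁) ha.le,
      fun h => hle₂.trans_lt (mul_neg_of_pos_of_neg ha h)⟩
  obtain ⟨t₀, ht₀, hZt₀⟩ : ∃ t₀, 0 < t₀ ∧ Z t₀ ≠ 0 := by
    by_cases h : Z t₁ = 0
    · exact ⟨t₂, ht₂, fun h' => hne (h.trans h'.symm)⟩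
    · exact ⟨t₁, ht₁, h⟩
  rcases hZt₀.lt_or_gt with hneg | hpos
  · have hneg' : ∀ t, 0 < t → 0 < -Z t := fun t ht => neg_pos.2 ((hsign t₀ ht₀ t ht).2 hneg)
    obtain ⟨c, ρ, hc, hρ, h⟩ := exists_exp_of_scale_of_pos hΓ (Y := fun t => (-Z t)⁻¹)
      (fun t ht t' ht' htt' => inv_anti₀ (hneg' t' ht') (neg_le_neg (hZ ht ht' htt')))
      (fun t ht => inv_pos.2 (hneg' t ht))
      (fun r hr hr₀ => by
        obtain ⟨a, ha, h⟩ := hshift r hr hr₀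
        exact ⟨a⁻¹, inv_pos.2 ha, fun t ht => by rw [h t ht, ← mul_neg, mul_inv]⟩)
      ht₁ ht₂ (by simpa using hne)
    refine ⟨c⁻¹, ρ, inv_pos.2 hc, hρ, Or.inr fun t ht => ?_⟩
    rw [exp_neg, ← mul_inv, ← h t ht, inv_inv, neg_neg]
  · exact (exists_exp_of_scale_of_pos hΓ hZ (fun t ht => (hsign t₀ ht₀ t ht).1 hpos) hshift
      ht₁ ht₂ hne).imp fun c ⟨ρ, hc, hρ, h⟩ => ⟨ρ, hc, hρ, Or.inl h⟩

-- the affine maps of two shifts commute, so they fix the same point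
lemma sub_div_one_sub_eq_mul {W : ℝ → ℝ} {r₀ a₀ b₀ r a b : ℝ} (hr₀ : 0 ≤ r₀) (hr : 0 ≤ r)
    (ha₀ : a₀ ≠ 1) (h₀ : ∀ t, 0 < t → W (t + r₀) = a₀ * W t + b₀)
    (h : ∀ t, 0 < t → W (t + r) = a * W t + b) {t : ℝ} (ht : 0 < t) :
    W (t + r) - b₀ / (1 - a₀) = a * (W t - b₀ / (1 - a₀)) := by
  have e₁ := h₀ (1 + r) (by linarith)
  have e₂ := h (1 + r₀) (by linarith)
  rw [h 1 one_pos] at e₁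
  rw [h₀ 1 one_pos, show 1 + r₀ + r = 1 + r + r₀ by ring] at e₂
  have hcomm : a * b₀ + b = a₀ * b + b₀ := by linear_combination e₁ - e₂
  have : 1 - a₀ ≠ 0 := sub_ne_zero.2 (Ne.symm ha₀)
  rw [h t ht]
  field_simp
  linear_combination hcomm

lemma exists_eq_of_forall_hasAffineShift (hΓ : Dense (Γ : Set ℝ)) {W : ℝ → ℝ}
    (hW : MonotoneOn W (Ioi 0)) {t₁ t₂ : ℝ} (ht₁ : 0 < t₁) (ht₂ : 0 < t₂) (hne : W t₁ ≠ W t₂)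
    (hshift : ∀ r ∈ Γ, 0 < r → HasAffineShift W r) :
    ∃ c d, 0 < c ∧ ((∀ t, 0 < t → W t = c * t + d) ∨
      (∃ α, 0 < α ∧ ∀ t, 0 < t → W t = c * exp (t / α) + d) ∨
      (∃ α, 0 < α ∧ ∀ t, 0 < t → W t = c * -exp (-t / α) + d)) := by
  by_cases htrans : ∀ r ∈ Γ, 0 < r → ∃ b, ∀ t, 0 < t → W (t + r) = W t + b
  · obtain ⟨c, d, hc, h⟩ := exists_pos_mul_add_of_translate hΓ hW htrans ht₁ ht₂ hne
    exact ⟨c, d, hc, Or.inl h⟩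
  push Not at htrans
  obtain ⟨r₀, hr₀Γ, hr₀, hno⟩ := htrans
  obtain ⟨a₀, b₀, -, h₀⟩ := hshift r₀ hr₀Γ hr₀
  have ha₀ : a₀ ≠ 1 := by
    rintro rfl
    obtain ⟨t, ht, hne'⟩ := hno b₀
    exact hne' (by rw [h₀ t ht, one_mul])
  set p := b₀ / (1 - a₀)
  obtain ⟨c, ρ, hc, hρ, h | h⟩ := exists_exp_of_scale hΓ (Z := fun t => W t - p)
    (fun t ht t' ht' htt' => sub_le_sub_right (hW ht ht' htt') p)
    (fun r hr hr' => by
      obtain ⟨a, b, ha, hab⟩ := hshift r hr hr'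
      exact ⟨a, ha, fun t ht => sub_div_one_sub_eq_mul hr₀.le hr'.le ha₀ h₀ hab ht⟩)
    ht₁ ht₂ (by simpa using hne)
  · refine ⟨c, p, hc, Or.inr (Or.inl ⟨ρ⁻¹, inv_pos.2 hρ, fun t ht => ?_⟩)⟩
    rw [div_inv_eq_mul, mul_comm t, ← h t ht]
    ring
  · refine ⟨c, p, hc, Or.inr (Or.inr ⟨ρ⁻¹, inv_pos.2 hρ, fun t ht => ?_⟩)⟩
    rw [div_inv_eq_mul, neg_mul, mul_comm t, mul_neg, ← h t ht]
    ring

end DenseShifts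

lemma hasAffineShift_log_nat_iff {W : ℝ → ℝ} (hW : MonotoneOn W (Ioi 0)) {t₁ t₂ : ℝ}
    (ht₁ : 0 < t₁) (ht₂ : 0 < t₂) (hne : W t₁ ≠ W t₂) :
    (∀ n : ℕ, 1 ≤ n → HasAffineShift W (log n)) ↔
      ∃ c d, 0 < c ∧ ((∀ t, 0 < t → W t = c * t + d) ∨
        (∃ α, 0 < α ∧ ∀ t, 0 < t → W t = c * exp (t / α) + d) ∨
        (∃ α, 0 < α ∧ ∀ t, 0 < t → W t = c * -exp (-t / α) + d)) := by
  refine ⟨fun h => exists_eq_of_forall_hasAffineShift dense_logNatRatios hW ht₁ ht₂ hne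
    fun r hr hr₀ => hasAffineShift_of_mem_logNatRatios h hr hr₀.le, ?_⟩
  rintro ⟨c, d, -, h | ⟨α, -, h⟩ | ⟨α, -, h⟩⟩ n hn <;>
    have hlog : 0 ≤ log n := log_nonneg (by exact_mod_cast hn)
  · exact (hasAffineShift_id _).of_eqOn_affine hlog h
  · exact (hasAffineShift_exp_div α _).of_eqOn_affine hlog h
  · exact (hasAffineShift_neg_exp_neg_div α _).of_eqOn_affine hlog h

/-- A nondegenerate distribution function is freely max-stable iff it is
of free extreme-value type. -/
theorem freelyMaxStable_iff_freeExtremeValueType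
    (G : ℝ → ℝ) (hG : IsDistFun G) (hnd : ∃ x, 0 < G x ∧ G x < 1) :
    FreelyMaxStable G ↔
      ∃ a b : ℝ, 0 < a ∧
        ((∀ x : ℝ, G (a * x + b) = expDF x) ∨
         (∃ α : ℝ, 0 < α ∧ ∀ x : ℝ, G (a * x + b) = paretoDF α x) ∨
         (∃ α : ℝ, 0 < α ∧ ∀ x : ℝ, G (a * x + b) = betaDF α x)) := by
  obtain ⟨W, hW⟩ := hG.exists_isLogTailQuantile
  obtain ⟨x, hx₀, hx₁⟩ := hnd
  obtain ⟨t₁, t₂, ht₁, ht₂, hne⟩ := hW.exists_ne hx₀ hx₁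
  rw [hW.freelyMaxStable_iff hG.mem_Icc, hasAffineShift_log_nat_iff hW.monotoneOn ht₁ ht₂ hne]
  refine exists₂_congr fun a b => and_congr_right fun ha => or_congr ?_ (or_congr ?_ ?_)
  · exact (hW.comp_affine_eq_iff hG.mem_Icc ha b isLogTailQuantile_expDF expDF_mem_Icc).symm
  · exact exists_congr fun α => and_congr_right fun hα => (hW.comp_affine_eq_iff hG.mem_Icc ha b
      (isLogTailQuantile_paretoDF hα) (paretoDF_mem_Icc α)).symm
  · exact exists_congr fun α => and_congr_right fun hα => (hW.comp_affine_eq_iff hG.mem_Icc ha b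
      (isLogTailQuantile_betaDF hα) (betaDF_mem_Icc hα.le)).symm
end

section
/- Let F be a distribution function. The following are equivalent: (a) there exist aₙ > 0 and bₙ ∈ ℝ such that for every x ∈ ℝ, F^{⊡n}(aₙ·x + bₙ) → max(1 − exp(−x), 0) as n → ∞; (b) there exist aₙ > 0 and bₙ ∈ ℝ such that for every x ∈ ℝ, F(aₙ·x + bₙ)^n → exp(−exp(−x)) as n → ∞. Moreover, there exists a single choice of sequences aₙ > 0, bₙ ∈ ℝ for which both limits hold simultaneously. -/
open Filter Topology

/-!
Since `freePow F n y = max (1 - n (1 - F y)) 0`, both conditions are statements about the tails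
`n (1 - F (aₙ x + bₙ))`. Condition (b) is equivalent to their convergence to `e^{-x}` for every `x`,
because `log y ≈ y - 1` near `1`; condition (a) gives that convergence for `x > 0`, where the
truncation at `0` is inactive. To reach `x ≤ 0`, compare level `n` with level `mₙ ≈ e^{-s} n`: at
level `n` the tails of the normalization `(a_{mₙ}, b_{mₙ})` are `e^s` times larger, so they cover
the half-line `u > -s`. A convergence-of-types argument for the antitone tails shows that
`(aₙ, bₙ)` is asymptotically an affine reparametrization of that normalization, which transfers the
convergence to every `x > -s`.
-/

section

variable {ι : Type*} {l : Filter ι}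

theorem tendsto_mul_one_sub_iff_tendsto_mul_log {r f : ι → ℝ} (hr : ∀ i, 0 ≤ r i)
    (hf : Tendsto f l (𝓝 1)) {τ : ℝ} :
    Tendsto (fun i => r i * (1 - f i)) l (𝓝 τ) ↔
      Tendsto (fun i => r i * Real.log (f i)) l (𝓝 (-τ)) := by
  have hpos : ∀ᶠ i in l, 0 < f i := hf.eventually (eventually_gt_nhds one_pos)
  -- `1 - 1/y ≤ log y ≤ y - 1` squeezes `-r log f` between `r (1 - f)` and `r (1 - f) / f`.
  have hlow : ∀ᶠ i in l, r i * (1 - f i) ≤ -(r i * Real.log (f i)) := by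
    filter_upwards [hpos] with i hi
    nlinarith [Real.log_le_sub_one_of_pos hi, hr i]
  have hup : ∀ᶠ i in l, -(r i * Real.log (f i)) ≤ r i * (1 - f i) / f i := by
    filter_upwards [hpos] with i hi
    have hlog : f i - 1 ≤ f i * Real.log (f i) := by
      have := mul_le_mul_of_nonneg_left (Real.one_sub_inv_le_log_of_pos hi) hi.le
      rwa [mul_sub, mul_one, mul_inv_cancel₀ hi.ne'] at this
    rw [le_div_iff₀ hi]
    nlinarith [hr i]
  have hneg : Tendsto (fun i => r i * Real.log (f i)) l (𝓝 (-τ)) ↔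
      Tendsto (fun i => -(r i * Real.log (f i))) l (𝓝 τ) :=
    ⟨fun h => by simpa using h.neg, fun h => by simpa using h.neg⟩
  rw [hneg]
  constructor
  · intro h
    refine tendsto_of_tendsto_of_tendsto_of_le_of_le' h ?_ hlow hup
    exact div_one τ ▸ h.div hf one_ne_zero
  · intro h
    refine tendsto_of_tendsto_of_tendsto_of_le_of_le'
      (g := fun i => f i * -(r i * Real.log (f i))) (one_mul τ ▸ hf.mul h) h ?_ hlow
    filter_upwards [hpos, hup] with i hi h
    rwa [le_div_iff₀ hi, mul_comm] at h

section Antitone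

variable {φ : ι → ℝ → ℝ} {g : ℝ → ℝ} {L : ℝ}

theorem tendsto_apply_of_antitone (hφ : ∀ i, Antitone (φ i))
    (hlim : ∀ u, L < u → Tendsto (fun i => φ i u) l (𝓝 (g u)))
    {x : ℝ} (hx : L < x) (hg : ContinuousAt g x) {w : ι → ℝ} (hw : Tendsto w l (𝓝 x)) :
    Tendsto (fun i => φ i (w i)) l (𝓝 (g x)) := by
  rw [tendsto_order]
  constructor
  · intro c hc
    obtain ⟨u, hcu, hxu⟩ : ∃ u, c < g u ∧ x < u :=
      ((hg.eventually (eventually_gt_nhds hc)).filter_mono nhdsWithin_le_nhds |>.and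
        (self_mem_nhdsWithin (s := Set.Ioi x))).exists
    filter_upwards [(hlim u (hx.trans hxu)).eventually (eventually_gt_nhds hcu),
      hw.eventually (eventually_lt_nhds hxu)] with i hi hwi
    exact hi.trans_le (hφ i hwi.le)
  · intro c hc
    obtain ⟨u, hcu, hLu, hux⟩ : ∃ u, g u < c ∧ L < u ∧ u < x :=
      ((hg.eventually (eventually_lt_nhds hc)).filter_mono nhdsWithin_le_nhds |>.and
        (Ioo_mem_nhdsLT hx)).exists
    filter_upwards [(hlim u hLu).eventually (eventually_lt_nhds hcu),
      hw.eventually (eventually_gt_nhds hux)] with i hi hwi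
    exact (hφ i hwi.le).trans_lt hi

theorem tendsto_of_tendsto_apply_of_antitone (hφ : ∀ i, Antitone (φ i))
    (hlim : ∀ u, L < u → Tendsto (fun i => φ i u) l (𝓝 (g u)))
    (hg : StrictAntiOn g (Set.Ioi L)) {z : ℝ} (hz : L < z) {w : ι → ℝ}
    (hw : Tendsto (fun i => φ i (w i)) l (𝓝 (g z))) : Tendsto w l (𝓝 z) := by
  rw [tendsto_order]
  constructor
  · intro c hc
    obtain ⟨u, hcLu, huz⟩ := exists_between (max_lt hc hz)
    have hLu : L < u := (le_max_right c L).trans_lt hcLu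
    filter_upwards [hw.eventually_lt (hlim u hLu) (hg hLu hz huz)] with i hi
    exact (le_max_left c L).trans_lt (hcLu.trans ((hφ i).reflect_lt hi))
  · intro c hc
    obtain ⟨u, hzu, huc⟩ := exists_between hc
    have hLu : L < u := hz.trans hzu
    filter_upwards [(hlim u hLu).eventually_lt hw (hg hz hLu hzu)] with i hi
    exact ((hφ i).reflect_lt hi).trans huc

end Antitone

theorem tendsto_mul_add_of_tendsto_at_two_points {p q : ι → ℝ}
    {x₁ x₂ : ℝ} (hne : x₁ ≠ x₂) (h₁ : Tendsto (fun i => p i * x₁ + q i) l (𝓝 x₁))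
    (h₂ : Tendsto (fun i => p i * x₂ + q i) l (𝓝 x₂)) (x : ℝ) :
    Tendsto (fun i => p i * x + q i) l (𝓝 x) := by
  have hsub : x₂ - x₁ ≠ 0 := sub_ne_zero.2 hne.symm
  have hp : Tendsto p l (𝓝 1) := by
    have := (h₂.sub h₁).div_const (x₂ - x₁)
    rw [div_self hsub] at this
    refine this.congr fun i => ?_
    field_simp
    ring
  have hq : Tendsto q l (𝓝 0) := by
    have := h₁.sub (hp.mul_const x₁)
    rw [one_mul, sub_self] at this
    exact this.congr fun i => by ring
  simpa using (hp.mul_const x).add hq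

theorem tendsto_apply_mul_add_of_tendsto_apply_mul_add {T : ι → ℝ → ℝ}
    (hT : ∀ i, Antitone (T i)) {g : ℝ → ℝ} (hg_anti : StrictAnti g) (hg_cont : Continuous g)
    {a b α β : ι → ℝ} (hα : ∀ i, 0 < α i) {L₁ L₂ : ℝ}
    (hab : ∀ x, L₁ < x → Tendsto (fun i => T i (a i * x + b i)) l (𝓝 (g x)))
    (hαβ : ∀ u, L₂ < u → Tendsto (fun i => T i (α i * u + β i)) l (𝓝 (g u)))
    {x : ℝ} (hx : L₂ < x) : Tendsto (fun i => T i (a i * x + b i)) l (𝓝 (g x)) := by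
  have hφ : ∀ i, Antitone fun u => T i (α i * u + β i) := fun i =>
    (hT i).comp_monotone fun u v huv => by gcongr; exact (hα i).le
  have hcoord : ∀ i y, α i * ((a i / α i) * y + (b i - β i) / α i) + β i = a i * y + b i :=
    fun i y => by field_simp [(hα i).ne']; ring
  have hpin : ∀ y, max L₁ L₂ < y →
      Tendsto (fun i => (a i / α i) * y + (b i - β i) / α i) l (𝓝 y) := fun y hy =>
    tendsto_of_tendsto_apply_of_antitone hφ hαβ (hg_anti.strictAntiOn _)
      ((le_max_right _ _).trans_lt hy)
      (by simpa only [hcoord] using hab y ((le_max_left _ _).trans_lt hy))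
  have hconv := tendsto_mul_add_of_tendsto_at_two_points
    (by norm_num : max L₁ L₂ + 1 ≠ max L₁ L₂ + 2) (hpin _ (by linarith)) (hpin _ (by linarith)) x
  simpa only [hcoord] using
    tendsto_apply_of_antitone hφ hαβ hx hg_cont.continuousAt hconv

end

theorem tendsto_one_of_tendsto_pow {f : ℕ → ℝ} (hf : ∀ n, 0 ≤ f n) {L : ℝ} (hL : 0 < L)
    (h : Tendsto (fun n => f n ^ n) atTop (𝓝 L)) : Tendsto f atTop (𝓝 1) := by
  have hpos : ∀ᶠ n in atTop, 0 < f n := by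
    filter_upwards [h.eventually (eventually_gt_nhds hL), eventually_ne_atTop 0] with n hn hn0
    exact (hf n).lt_of_ne fun h0 => by simp [← h0, hn0] at hn
  have hlog : Tendsto (fun n => Real.log (f n)) atTop (𝓝 0) := by
    have := (h.log hL.ne').div_atTop tendsto_natCast_atTop_atTop
    refine this.congr' ?_
    filter_upwards [eventually_ne_atTop 0] with n hn
    rw [Real.log_pow]
    field_simp
  have := (Real.continuous_exp.tendsto 0).comp hlog
  rw [Real.exp_zero] at this
  refine this.congr' ?_
  filter_upwards [hpos] with n hn using Real.exp_log hn

theorem tendsto_pow_iff_tendsto_mul_log {f : ℕ → ℝ} (hf : Tendsto f atTop (𝓝 1)) {L : ℝ}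
    (hL : 0 < L) :
    Tendsto (fun n => f n ^ n) atTop (𝓝 L) ↔
      Tendsto (fun n : ℕ => (n : ℝ) * Real.log (f n)) atTop (𝓝 (Real.log L)) := by
  have hpow : ∀ᶠ n in atTop, f n ^ n = Real.exp (n * Real.log (f n)) := by
    filter_upwards [hf.eventually (eventually_gt_nhds one_pos)] with n hn
    rw [← Real.log_pow, Real.exp_log (pow_pos hn n)]
  constructor
  · intro h
    refine (h.log hL.ne').congr' ?_
    filter_upwards [hpow] with n hn
    rw [hn, Real.log_exp]
  · intro h
    have := (Real.continuous_exp.tendsto _).comp h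
    rw [Function.comp_def, Real.exp_log hL] at this
    exact this.congr' (hpow.mono fun n hn => hn.symm)

theorem tendsto_pow_iff_tendsto_mul_one_sub {f : ℕ → ℝ} (hf : ∀ n, 0 ≤ f n) {τ : ℝ} :
    Tendsto (fun n => f n ^ n) atTop (𝓝 (Real.exp (-τ))) ↔
      Tendsto (fun n : ℕ => (n : ℝ) * (1 - f n)) atTop (𝓝 τ) := by
  have hcast : ∀ n : ℕ, 0 ≤ (n : ℝ) := fun n => n.cast_nonneg
  constructor
  · intro h
    have hf1 := tendsto_one_of_tendsto_pow hf (Real.exp_pos _) h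
    rw [tendsto_mul_one_sub_iff_tendsto_mul_log hcast hf1, ← Real.log_exp (-τ)]
    exact (tendsto_pow_iff_tendsto_mul_log hf1 (Real.exp_pos _)).1 h
  · intro h
    have hf1 : Tendsto f atTop (𝓝 1) := by
      have := (tendsto_const_nhds (x := (1 : ℝ))).sub (h.div_atTop tendsto_natCast_atTop_atTop)
      rw [sub_zero] at this
      refine this.congr' ?_
      filter_upwards [eventually_ne_atTop 0] with n hn
      field_simp
      ring
    rw [tendsto_pow_iff_tendsto_mul_log hf1 (Real.exp_pos _), Real.log_exp]
    exact (tendsto_mul_one_sub_iff_tendsto_mul_log hcast hf1).1 h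

theorem tendsto_mul_comp_of_tendsto_mul {t : ℕ → ℝ} {τ : ℝ}
    (ht : Tendsto (fun n : ℕ => (n : ℝ) * t n) atTop (𝓝 τ)) {m : ℕ → ℕ}
    (hm : Tendsto m atTop atTop) {c : ℝ} (hc : c ≠ 0)
    (hmc : Tendsto (fun n : ℕ => (m n : ℝ) / n) atTop (𝓝 c)) :
    Tendsto (fun n : ℕ => (n : ℝ) * t (m n)) atTop (𝓝 (τ / c)) := by
  refine ((ht.comp hm).div hmc hc).congr' ?_
  filter_upwards [hm.eventually_ne_atTop 0, eventually_ne_atTop 0] with n hmn hn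
  simp only [Pi.div_apply, Function.comp_apply]
  field_simp

theorem tendsto_mul_one_sub_of_tendsto_on_pos {F : ℝ → ℝ} (hF : Monotone F) {a b : ℕ → ℝ}
    (ha : ∀ n, 0 < a n)
    (h : ∀ x, 0 < x →
      Tendsto (fun n : ℕ => (n : ℝ) * (1 - F (a n * x + b n))) atTop (𝓝 (Real.exp (-x))))
    (x : ℝ) :
    Tendsto (fun n : ℕ => (n : ℝ) * (1 - F (a n * x + b n))) atTop (𝓝 (Real.exp (-x))) := by
  obtain ⟨s, hsx⟩ : ∃ s : ℝ, -s < x := ⟨1 - x, by linarith⟩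
  set m : ℕ → ℕ := fun n => ⌊Real.exp (-s) * n⌋₊
  have hm : Tendsto m atTop atTop := tendsto_nat_floor_mul_atTop _ (Real.exp_pos _)
  have hmc : Tendsto (fun n : ℕ => (m n : ℝ) / n) atTop (𝓝 (Real.exp (-s))) :=
    (tendsto_nat_floor_mul_div_atTop (Real.exp_pos _).le).comp tendsto_natCast_atTop_atTop
  have hlevel : ∀ u, -s < u → Tendsto (fun n : ℕ =>
      (n : ℝ) * (1 - F (a (m n) * u + (b (m n) + a (m n) * s)))) atTop (𝓝 (Real.exp (-u))) := by
    intro u hu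
    have := tendsto_mul_comp_of_tendsto_mul (h (u + s) (by linarith)) hm (Real.exp_pos _).ne' hmc
    rw [← Real.exp_sub, neg_add, add_sub_cancel_right] at this
    convert this using 5
    ring
  refine tendsto_apply_mul_add_of_tendsto_apply_mul_add
    (T := fun (n : ℕ) y => (n : ℝ) * (1 - F y)) (fun n y z hyz => ?_)
    (Real.exp_strictMono.comp_strictAnti fun _ _ h => neg_lt_neg h)
    (by fun_prop) (fun n => ha (m n)) h hlevel hsx
  exact mul_le_mul_of_nonneg_left (sub_le_sub_left (hF hyz) 1) n.cast_nonneg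

theorem freePow_eq_max_one_sub (F : ℝ → ℝ) (n : ℕ) (y : ℝ) :
    freePow F n y = max (1 - n * (1 - F y)) 0 := by
  rw [freePow]
  ring_nf

theorem tendsto_freePow_of_tendsto_mul_one_sub {F : ℝ → ℝ} {y : ℕ → ℝ} {x : ℝ}
    (h : Tendsto (fun n : ℕ => (n : ℝ) * (1 - F (y n))) atTop (𝓝 (Real.exp (-x)))) :
    Tendsto (fun n => freePow F n (y n)) atTop (𝓝 (expDF x)) := by
  simp only [freePow_eq_max_one_sub, expDF]
  exact ((tendsto_const_nhds.sub h).max tendsto_const_nhds)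

theorem tendsto_mul_one_sub_of_tendsto_freePow {F : ℝ → ℝ} {y : ℕ → ℝ} {x : ℝ} (hx : 0 < x)
    (h : Tendsto (fun n => freePow F n (y n)) atTop (𝓝 (expDF x))) :
    Tendsto (fun n : ℕ => (n : ℝ) * (1 - F (y n))) atTop (𝓝 (Real.exp (-x))) := by
  have hpos : 0 < 1 - Real.exp (-x) := sub_pos.2 (Real.exp_lt_one_iff.2 (neg_lt_zero.2 hx))
  rw [expDF, max_eq_left hpos.le] at h
  have := (tendsto_const_nhds (x := (1 : ℝ))).sub h
  rw [sub_sub_cancel] at this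
  refine this.congr' ?_
  filter_upwards [h.eventually (eventually_gt_nhds hpos)] with n hn
  rw [freePow_eq_max_one_sub] at hn ⊢
  rw [max_eq_left (lt_max_iff.1 hn |>.resolve_right (lt_irrefl 0)).le]
  ring

/-- The free max-domain of attraction of the exponential law coincides with
the classical max-domain of attraction of the Gumbel law, with the same
normalizing constants. -/
theorem freeDomAttr_exp_iff_classicalDomAttr_gumbel
    (F : ℝ → ℝ) (hF : IsDistFun F) :
    ((∃ a b : ℕ → ℝ, (∀ n, 0 < a n) ∧
        ∀ x : ℝ, Tendsto (fun n => freePow F n (a n * x + b n)) atTop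
          (𝓝 (expDF x))) ↔
      (∃ a b : ℕ → ℝ, (∀ n, 0 < a n) ∧
        ∀ x : ℝ, Tendsto (fun n => F (a n * x + b n) ^ n) atTop
          (𝓝 (Real.exp (-Real.exp (-x)))))) ∧
    ((∃ a b : ℕ → ℝ, (∀ n, 0 < a n) ∧
        ∀ x : ℝ, Tendsto (fun n => freePow F n (a n * x + b n)) atTop
          (𝓝 (expDF x))) →
      ∃ a b : ℕ → ℝ, (∀ n, 0 < a n) ∧
        (∀ x : ℝ, Tendsto (fun n => freePow F n (a n * x + b n)) atTop
          (𝓝 (expDF x))) ∧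
        (∀ x : ℝ, Tendsto (fun n => F (a n * x + b n) ^ n) atTop
          (𝓝 (Real.exp (-Real.exp (-x)))))) := by
  obtain ⟨hmono, -, hbot, -⟩ := hF
  have hF0 : ∀ y, 0 ≤ F y := fun y =>
    le_of_tendsto hbot (eventually_atBot.2 ⟨y, fun _ hz => hmono hz⟩)
  have hpow (a b : ℕ → ℝ) (x : ℝ) := tendsto_pow_iff_tendsto_mul_one_sub
    (f := fun n => F (a n * x + b n)) (fun _ => hF0 _) (τ := Real.exp (-x))
  have hgumbel : ∀ a b : ℕ → ℝ, (∀ n, 0 < a n) →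
      (∀ x, Tendsto (fun n => freePow F n (a n * x + b n)) atTop (𝓝 (expDF x))) →
      ∀ x, Tendsto (fun n => F (a n * x + b n) ^ n) atTop (𝓝 (Real.exp (-Real.exp (-x)))) :=
    fun a b ha hfree x => (hpow a b x).2 <| tendsto_mul_one_sub_of_tendsto_on_pos hmono ha
      (fun y hy => tendsto_mul_one_sub_of_tendsto_freePow hy (hfree y)) x
  refine ⟨⟨?_, ?_⟩, ?_⟩
  · rintro ⟨a, b, ha, hfree⟩
    exact ⟨a, b, ha, hgumbel a b ha hfree⟩
  · rintro ⟨a, b, ha, hclassical⟩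
    exact ⟨a, b, ha, fun x =>
      tendsto_freePow_of_tendsto_mul_one_sub ((hpow a b x).1 (hclassical x))⟩
  · rintro ⟨a, b, ha, hfree⟩
    exact ⟨a, b, ha, hfree, hgumbel a b ha hfree⟩
end

section
/- Let F be a distribution function, α > 0, and suppose aₙ > 0 and bₙ ∈ ℝ are such that F^{⊡n}(aₙ·x + bₙ) → P_α(x) as n → ∞ for every x ∈ ℝ. Then the sequence of norming constants is regularly varying of index 1/α: for every x > 0, a_{⌊t·x⌋}/a_{⌊t⌋} → x^{1/α} as t → +∞ (t real). -/
open Filter Topology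

lemma tail_lim {F : ℝ → ℝ} {α : ℝ} {a b : ℕ → ℝ} (hα : 0 < α)
    (hlim : ∀ x : ℝ, Tendsto (fun n => freePow F n (a n * x + b n)) atTop
      (𝓝 (paretoDF α x)))
    {y : ℝ} (hy : 1 < y) :
    Tendsto (fun n : ℕ => (n : ℝ) * (1 - F (a n * y + b n))) atTop (𝓝 (y ^ (-α))) := by
  have hy0 : (0:ℝ) < y := lt_trans one_pos hy
  have hlt1 : y ^ (-α) < 1 := Real.rpow_lt_one_of_one_lt_of_neg hy (neg_lt_zero.2 hα)
  have hpos : 0 < y ^ (-α) := Real.rpow_pos_of_pos hy0 _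
  have hP : paretoDF α y = 1 - y ^ (-α) := by
    rw [paretoDF, if_pos hy0, max_eq_left (by linarith)]
  have h1 : Tendsto (fun n : ℕ => max (1 - (n : ℝ) * (1 - F (a n * y + b n))) 0) atTop
      (𝓝 (1 - y ^ (-α))) := by
    have := hlim y
    rw [hP] at this
    refine this.congr fun n => ?_
    rw [freePow]
    ring_nf
  have hev : ∀ᶠ n : ℕ in atTop,
      max (1 - (n : ℝ) * (1 - F (a n * y + b n))) 0 = 1 - (n : ℝ) * (1 - F (a n * y + b n)) := by
    filter_upwards [h1.eventually (eventually_gt_nhds (by linarith : (0:ℝ) < 1 - y ^ (-α)))]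
      with n hn
    rcases max_cases (1 - (n : ℝ) * (1 - F (a n * y + b n))) 0 with ⟨h, _⟩ | ⟨h, _⟩
    · exact h
    · rw [h] at hn; exact absurd hn (lt_irrefl 0)
  have h2 : Tendsto (fun n : ℕ => 1 - (n : ℝ) * (1 - F (a n * y + b n))) atTop
      (𝓝 (1 - y ^ (-α))) := h1.congr' hev
  have h3 : Tendsto (fun n : ℕ => 1 - (1 - (n : ℝ) * (1 - F (a n * y + b n)))) atTop
      (𝓝 (1 - (1 - y ^ (-α)))) := (tendsto_const_nhds (x := (1:ℝ))).sub h2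
  simpa using h3


lemma floor_ratio {x : ℝ} (hx : 0 < x) :
    Tendsto (fun t : ℝ => ((⌊t * x⌋₊ : ℝ)) / (⌊t⌋₊ : ℝ)) atTop (𝓝 x) := by
  have h1 : Tendsto (fun t : ℝ => (⌊t * x⌋₊ : ℝ) / t) atTop (𝓝 x) :=
    (tendsto_nat_floor_mul_div_atTop hx.le).congr fun t => by rw [mul_comm]
  have h2 : Tendsto (fun t : ℝ => (⌊t⌋₊ : ℝ) / t) atTop (𝓝 1) := tendsto_nat_floor_div_atTop
  have h3 := h1.div h2 one_ne_zero
  rw [div_one] at h3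
  refine h3.congr' ?_
  filter_upwards [eventually_gt_atTop (0:ℝ)] with t ht
  show (⌊t * x⌋₊ : ℝ) / t / ((⌊t⌋₊ : ℝ) / t) = _
  rw [div_div_div_comm, div_self ht.ne', div_one]

lemma rpow_cond {α r y z : ℝ} (hα : 0 < α) (hr : 0 < r) (hy : 0 < y) (hz : 0 < z)
    (h : y / r < z) : z ^ (-α) < r ^ α * y ^ (-α) := by
  have h0 : 0 < y / r := div_pos hy hr
  have h1 : (y / r) ^ (-α) = r ^ α * y ^ (-α) := by
    rw [Real.div_rpow hy.le hr.le, Real.rpow_neg hr.le, div_inv_eq_mul, mul_comm]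
  rw [← h1]
  exact Real.rpow_lt_rpow_of_neg h0 h (neg_lt_zero.2 hα)



lemma order_lemma {F : ℝ → ℝ} {α : ℝ} {a b : ℕ → ℝ} (hF : IsDistFun F) (hα : 0 < α)
    (hlim : ∀ x : ℝ, Tendsto (fun n => freePow F n (a n * x + b n)) atTop
      (𝓝 (paretoDF α x)))
    {c y z : ℝ} (hy : 1 < y) (hz : 1 < z)
    {p q : ℝ → ℕ} (hp : Tendsto p atTop atTop) (hq : Tendsto q atTop atTop)
    (hr : Tendsto (fun t => (p t : ℝ) / (q t : ℝ)) atTop (𝓝 c))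
    (hzy : z ^ (-α) < c * y ^ (-α)) :
    ∀ᶠ t in atTop, a (q t) * y + b (q t) < a (p t) * z + b (p t) := by
  have h1 : Tendsto (fun t => (p t : ℝ) * (1 - F (a (p t) * z + b (p t)))) atTop
      (𝓝 (z ^ (-α))) := (tail_lim hα hlim hz).comp hp
  have h2' : Tendsto (fun t => (q t : ℝ) * (1 - F (a (q t) * y + b (q t)))) atTop
      (𝓝 (y ^ (-α))) := (tail_lim hα hlim hy).comp hq
  have h2 : Tendsto (fun t => (p t : ℝ) * (1 - F (a (q t) * y + b (q t)))) atTop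
      (𝓝 (c * y ^ (-α))) := by
    refine (hr.mul h2').congr' ?_
    filter_upwards [hq.eventually (eventually_gt_atTop 0)] with t ht
    have hq0 : (q t : ℝ) ≠ 0 := Nat.cast_ne_zero.2 ht.ne'
    field_simp
  filter_upwards [h1.eventually_lt h2 hzy, hp.eventually (eventually_gt_atTop 0)]
    with t hlt hpt
  have hp0 : (0:ℝ) < (p t : ℝ) := Nat.cast_pos.2 hpt
  have hG : 1 - F (a (p t) * z + b (p t)) < 1 - F (a (q t) * y + b (q t)) :=
    lt_of_mul_lt_mul_left hlt hp0.le
  have hFF : F (a (q t) * y + b (q t)) < F (a (p t) * z + b (p t)) := by linarith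
  by_contra hle
  push_neg at hle
  exact absurd (hF.1 hle) (not_le.2 hFF)




lemma main_gt_one {F : ℝ → ℝ} {α : ℝ} {a b : ℕ → ℝ} (hF : IsDistFun F) (hα : 0 < α)
    (ha : ∀ n, 0 < a n)
    (hlim : ∀ x : ℝ, Tendsto (fun n => freePow F n (a n * x + b n)) atTop
      (𝓝 (paretoDF α x)))
    {x : ℝ} (hx : 1 < x) :
    Tendsto (fun t : ℝ => a ⌊t * x⌋₊ / a ⌊t⌋₊) atTop (𝓝 (x ^ (1 / α))) := by
  have hx0 : (0:ℝ) < x := lt_trans one_pos hx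
  set r := x ^ (1 / α) with hrdef
  have hr1 : 1 < r := Real.one_lt_rpow_iff_of_pos hx0 |>.2 (Or.inl ⟨hx, by positivity⟩)
  have hr0 : (0:ℝ) < r := lt_trans one_pos hr1
  have hrα : r ^ α = x := by
    rw [hrdef, ← Real.rpow_mul hx0.le, one_div, inv_mul_cancel₀ hα.ne', Real.rpow_one]
  have hrinv : (r⁻¹) ^ α = x⁻¹ := by
    rw [Real.inv_rpow hr0.le, hrα]
  set p : ℝ → ℕ := fun t => ⌊t * x⌋₊ with hpdef
  set q : ℝ → ℕ := fun t => ⌊t⌋₊ with hqdef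
  have hp : Tendsto p atTop atTop :=
    tendsto_nat_floor_atTop.comp (tendsto_id.atTop_mul_const hx0)
  have hq : Tendsto q atTop atTop := tendsto_nat_floor_atTop
  have hrpq : Tendsto (fun t => (p t : ℝ) / (q t : ℝ)) atTop (𝓝 x) := floor_ratio hx0
  have hqp : Tendsto (fun t => (q t : ℝ) / (p t : ℝ)) atTop (𝓝 x⁻¹) := by
    simpa [inv_div] using hrpq.inv₀ hx0.ne'
  show Tendsto (fun t : ℝ => a (p t) / a (q t)) atTop (𝓝 r)
  refine tendsto_order.2 ⟨fun c hc => ?_, fun c hc => ?_⟩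
  · -- c < r : lower bound
    set ε : ℝ := min (r / 4) ((r - c) / 2) with hεdef
    have hε : 0 < ε := lt_min (by linarith) (by linarith)
    have hε4 : ε ≤ r / 4 := min_le_left _ _
    have hεc : ε ≤ (r - c) / 2 := min_le_right _ _
    -- A : y := 3r - ε, z := 3 ; B : v := 2, w := 2r + ε
    have hA : ∀ᶠ t in atTop,
        a (q t) * (3 * r - ε) + b (q t) < a (p t) * 3 + b (p t) := by
      refine order_lemma hF hα hlim (by linarith) (by norm_num) hp hq hrpq ?_
      rw [← hrα]
      exact rpow_cond hα hr0 (by linarith) (by norm_num)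
        ((div_lt_iff₀ hr0).2 (by linarith))
    have hB : ∀ᶠ t in atTop,
        a (p t) * 2 + b (p t) < a (q t) * (2 * r + ε) + b (q t) := by
      refine order_lemma hF hα hlim (by norm_num) (by linarith) hq hp hqp ?_
      rw [← hrinv]
      refine rpow_cond hα (inv_pos.2 hr0) (by norm_num) (by linarith) ?_
      rw [div_inv_eq_mul]; linarith
    filter_upwards [hA, hB] with t h1 h2
    have han := ha (q t)
    have ham := ha (p t)
    have key : a (q t) * (r - 2 * ε) < a (p t) := by nlinarith
    rw [lt_div_iff₀ han]
    calc c * a (q t) ≤ (r - 2 * ε) * a (q t) :=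
          mul_le_mul_of_nonneg_right (by linarith) han.le
      _ < a (p t) := by linarith [key]
  · -- r < c : upper bound
    set ε : ℝ := min (r / 2) ((c - r) / 2) with hεdef
    have hε : 0 < ε := lt_min (by linarith) (by linarith)
    have hε2 : ε ≤ r / 2 := min_le_left _ _
    have hεc : ε ≤ (c - r) / 2 := min_le_right _ _
    -- A : y := 2r - ε, z := 2 ; B : v := 3, w := 3r + ε
    have hA : ∀ᶠ t in atTop,
        a (q t) * (2 * r - ε) + b (q t) < a (p t) * 2 + b (p t) := by
      refine order_lemma hF hα hlim (by linarith) (by norm_num) hp hq hrpq ?_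
      rw [← hrα]
      exact rpow_cond hα hr0 (by linarith) (by norm_num)
        ((div_lt_iff₀ hr0).2 (by linarith))
    have hB : ∀ᶠ t in atTop,
        a (p t) * 3 + b (p t) < a (q t) * (3 * r + ε) + b (q t) := by
      refine order_lemma hF hα hlim (by norm_num) (by linarith) hq hp hqp ?_
      rw [← hrinv]
      refine rpow_cond hα (inv_pos.2 hr0) (by norm_num) (by linarith) ?_
      rw [div_inv_eq_mul]; linarith
    filter_upwards [hA, hB] with t h1 h2
    have han := ha (q t)
    have ham := ha (p t)
    have key : a (p t) < a (q t) * (r + 2 * ε) := by nlinarith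
    rw [div_lt_iff₀ han]
    calc a (p t) < a (q t) * (r + 2 * ε) := key
      _ ≤ a (q t) * c := mul_le_mul_of_nonneg_left (by linarith) han.le
      _ = c * a (q t) := mul_comm _ _




/-- If `F^{⊡n}(aₙ x + bₙ) → P_α(x)`, then the norming constants `aₙ` are
regularly varying of index `1/α`. -/
theorem pareto_norming_constants_regularlyVarying
    (F : ℝ → ℝ) (hF : IsDistFun F) (α : ℝ) (hα : 0 < α)
    (a b : ℕ → ℝ) (ha : ∀ n, 0 < a n)
    (hlim : ∀ x : ℝ, Tendsto (fun n => freePow F n (a n * x + b n)) atTop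
      (𝓝 (paretoDF α x))) :
    ∀ x : ℝ, 0 < x →
      Tendsto (fun t : ℝ => a ⌊t * x⌋₊ / a ⌊t⌋₊) atTop (𝓝 (x ^ (1 / α))) := by
  intro x hx0
  rcases lt_trichotomy x 1 with hx1 | rfl | hx1
  · have hxi : 1 < x⁻¹ := by rw [show (1:ℝ) = 1⁻¹ by norm_num, inv_lt_inv₀ one_pos hx0]; simpa using hx1
    have h := main_gt_one hF hα ha hlim hxi
    have hcomp := h.comp (tendsto_id.atTop_mul_const hx0)
    have h2 : Tendsto (fun t : ℝ => a ⌊t⌋₊ / a ⌊t * x⌋₊) atTop (𝓝 (x⁻¹ ^ (1 / α))) := by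
      refine hcomp.congr fun t => ?_
      simp only [Function.comp_apply, id_eq]
      rw [mul_inv_cancel_right₀ hx0.ne']
    have h3 := h2.inv₀ (by positivity)
    have heq : (x⁻¹ ^ (1 / α))⁻¹ = x ^ (1 / α) := by
      rw [Real.inv_rpow hx0.le, inv_inv]
    rw [heq] at h3
    exact h3.congr fun t => inv_div _ _
  · have heq : ∀ t : ℝ, a ⌊t * 1⌋₊ / a ⌊t⌋₊ = 1 := fun t => by
      rw [mul_one, div_self (ha _).ne']
    have : (fun t : ℝ => a ⌊t * 1⌋₊ / a ⌊t⌋₊) = fun _ : ℝ => (1:ℝ) := funext heq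
    rw [this, Real.one_rpow]
    exact tendsto_const_nhds
  · exact main_gt_one hF hα ha hlim hx1
end

section
/- Let F be a distribution function, α > 0, and suppose ω(F) = sup{x ∈ ℝ : F(x) < 1} is finite and (1 − F(ω(F) − x·h))/(1 − F(ω(F) − h)) → x^α as h ↓ 0 for every x > 0. Then there exists N such that for every n ≥ N the quantity uₙ = inf{t ∈ ℝ : 1 − F(t) < 1/n} is a real number with uₙ < ω(F), and for every x ∈ ℝ, F^{⊡n}((ω(F) − uₙ)·x + ω(F)) → B_α(x) as n → ∞; that is, the normalizing constants aₙ = ω(F) − uₙ and bₙ = ω(F) work for the free max-limit. -/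
open Filter Topology

/-- If `ω(F)` is finite and the tail near `ω(F)` is regularly varying of
exponent `α`, then the constants `aₙ = ω(F) - uₙ`, `bₙ = ω(F)` with
`uₙ = inf {t | 1 - F t < 1/n}` work for the free max-limit towards `B_α`. -/
theorem beta_norming_constants
    (F : ℝ → ℝ) (hF : IsDistFun F) (α : ℝ) (hα : 0 < α)
    (ω : ℝ) (hω : ω = sSup {y : ℝ | F y < 1})
    (hbdd : BddAbove {y : ℝ | F y < 1})
    (hrv : ∀ x : ℝ, 0 < x →
      Tendsto (fun h => (1 - F (ω - x * h)) / (1 - F (ω - h)))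
        (𝓝[>] (0 : ℝ)) (𝓝 (x ^ α)))
    (u : ℕ → ℝ) (hu : ∀ n, u n = sInf {t : ℝ | 1 - F t < 1 / (n : ℝ)}) :
    (∃ N : ℕ, ∀ n ≥ N,
      {t : ℝ | 1 - F t < 1 / (n : ℝ)}.Nonempty ∧
      BddBelow {t : ℝ | 1 - F t < 1 / (n : ℝ)} ∧ u n < ω) ∧
    ∀ x : ℝ, Tendsto (fun n => freePow F n ((ω - u n) * x + ω)) atTop
      (𝓝 (betaDF α x)) := by
  obtain ⟨hmono, hrc, hbot, htop⟩ := hF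
  -- basic bounds
  have hF1 : ∀ x, F x ≤ 1 := fun x =>
    ge_of_tendsto htop (eventually_atTop.2 ⟨x, fun y hy => hmono hy⟩)
  have hSne : {y : ℝ | F y < 1}.Nonempty := by
    obtain ⟨y, hy⟩ := (hbot.eventually_lt_const (by norm_num : (0:ℝ) < 1)).exists
    exact ⟨y, hy⟩
  -- F t < 1 for t < ω
  have hlt1 : ∀ t, t < ω → F t < 1 := by
    intro t ht
    obtain ⟨y, hy, hty⟩ := exists_lt_of_lt_csSup hSne (hω ▸ ht)
    exact lt_of_le_of_lt (hmono hty.le) hy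
  -- F t = 1 for t > ω
  have hgt1 : ∀ t, ω < t → F t = 1 := by
    intro t ht
    refine le_antisymm (hF1 t) ?_
    by_contra h
    push_neg at h
    exact absurd (hω ▸ le_csSup hbdd (show t ∈ {y : ℝ | F y < 1} from h)) (not_le.2 ht)
  have hFω : F ω = 1 := by
    have h1 : Tendsto F (𝓝[>] ω) (𝓝 (F ω)) :=
      (hrc ω).mono_left (nhdsWithin_mono _ Set.Ioi_subset_Ici_self)
    have h2 : Tendsto F (𝓝[>] ω) (𝓝 1) := by
      refine tendsto_const_nhds.congr' ?_
      filter_upwards [self_mem_nhdsWithin] with t ht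
      exact (hgt1 t ht).symm
    exact tendsto_nhds_unique h1 h2
  -- F tends to 1 from the left at ω (supremum form)
  have hεsup : ∀ ε : ℝ, 0 < ε → ∃ t, t < ω ∧ 1 - F t < ε := by
    intro ε hε
    by_contra hcon
    push_neg at hcon
    have hcon' : ∀ t, t < ω → F t ≤ 1 - ε := fun t ht => by
      have := hcon t ht; linarith
    set m := sSup (F '' Set.Iio ω) with hm
    have hm_bdd : BddAbove (F '' Set.Iio ω) := ⟨1, by rintro _ ⟨t, _, rfl⟩; exact hF1 t⟩
    have hm_ne : (F '' Set.Iio ω).Nonempty := ⟨F (ω - 1), ⟨ω - 1, by simp, rfl⟩⟩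
    have hmle : ∀ h : ℝ, 0 < h → F (ω - h) ≤ m := fun h hh =>
      le_csSup hm_bdd ⟨ω - h, by simp [hh], rfl⟩
    have hm1 : m ≤ 1 - ε := csSup_le hm_ne (by rintro _ ⟨t, ht, rfl⟩; exact hcon' t ht)
    set s : ℝ := (1/2 : ℝ) ^ α with hs
    have hs1 : s < 1 := Real.rpow_lt_one (by norm_num) (by norm_num) hα
    have hs0 : 0 < s := Real.rpow_pos_of_pos (by norm_num) α
    have h1m : 0 < 1 - m := by linarith
    set θ : ℝ := (1 - m) * (1 - s) / (2 * s) with hθ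
    have hθ0 : 0 < θ := div_pos (mul_pos h1m (by linarith)) (by linarith)
    set r₀ : ℝ := (1 - m) / (1 - m + θ) with hr₀
    have hr₀s : s < r₀ := by
      rw [hr₀, lt_div_iff₀ (by linarith)]
      have hst : s * θ = (1 - m) * (1 - s) / 2 := by rw [hθ]; field_simp
      nlinarith [hst, mul_pos h1m (show (0:ℝ) < 1 - s by linarith)]
    obtain ⟨_, ⟨t, htω, rfl⟩, htm⟩ :=
      exists_lt_of_lt_csSup hm_ne (show m - θ < m by linarith)
    have hev1 : ∀ᶠ h in 𝓝[>] (0 : ℝ),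
        (1 - F (ω - (1/2) * h)) / (1 - F (ω - h)) < r₀ :=
      (hrv (1/2) (by norm_num)).eventually_lt_const hr₀s
    have hev2 : ∀ᶠ h in 𝓝[>] (0 : ℝ), h < ω - t :=
      eventually_nhdsWithin_of_eventually_nhds
        (eventually_lt_nhds (show (0:ℝ) < ω - t by have h' : t < ω := htω; linarith))
    obtain ⟨h, hratio, hhlt, hh0⟩ := (hev1.and (hev2.and self_mem_nhdsWithin)).exists
    replace hh0 : (0:ℝ) < h := hh0
    have htlt : t < ω - h := by linarith
    have hden_lo : 1 - m ≤ 1 - F (ω - h) := by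
      have : m - θ < F (ω - h) := lt_of_lt_of_le htm (hmono htlt.le)
      have := hmle h hh0
      linarith
    have hden_hi : 1 - F (ω - h) < 1 - m + θ := by
      have : m - θ < F (ω - h) := lt_of_lt_of_le htm (hmono htlt.le)
      linarith
    have hnum_lo : 1 - m ≤ 1 - F (ω - (1/2) * h) := by
      have := hmle ((1/2) * h) (by linarith)
      linarith
    have hden_pos : 0 < 1 - F (ω - h) := lt_of_lt_of_le h1m hden_lo
    have : r₀ ≤ (1 - F (ω - (1/2) * h)) / (1 - F (ω - h)) := by
      rw [hr₀]
      exact div_le_div₀ (by linarith) hnum_lo hden_pos hden_hi.le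
    linarith
  -- the sets S n
  have hSmem : ∀ n : ℕ, 1 ≤ n → ∃ t, t < ω ∧ t ∈ {t : ℝ | 1 - F t < 1 / (n : ℝ)} := by
    intro n hn
    have hn0 : (0:ℝ) < 1 / n := by positivity
    obtain ⟨t, ht, ht'⟩ := hεsup (1/n) hn0
    exact ⟨t, ht, ht'⟩
  have hSbdd : ∀ n : ℕ, 2 ≤ n → BddBelow {t : ℝ | 1 - F t < 1 / (n : ℝ)} := by
    intro n hn
    have hn2 : (2:ℝ) ≤ n := by exact_mod_cast hn
    have hpos : (0:ℝ) < 1 - 1/n := by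
      have : (1:ℝ)/n ≤ 1/2 := one_div_le_one_div_of_le (by norm_num) hn2
      linarith
    obtain ⟨M, hM⟩ := eventually_atBot.1 (hbot.eventually_lt_const hpos)
    refine ⟨M, fun t ht => ?_⟩
    by_contra h
    push_neg at h
    have := hM t h.le
    simp only [Set.mem_setOf_eq] at ht
    linarith
  have hSne' : ∀ n : ℕ, 2 ≤ n → {t : ℝ | 1 - F t < 1 / (n : ℝ)}.Nonempty := by
    intro n hn
    obtain ⟨t, _, ht⟩ := hSmem n (le_trans (by norm_num) hn)
    exact ⟨t, ht⟩
  have hult : ∀ n : ℕ, 2 ≤ n → u n < ω := by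
    intro n hn
    obtain ⟨t, htω, ht⟩ := hSmem n (le_trans (by norm_num) hn)
    exact lt_of_le_of_lt (le_trans (le_of_eq (hu n)) (csInf_le (hSbdd n hn) ht)) htω
  refine ⟨⟨2, fun n hn => ⟨hSne' n hn, hSbdd n hn, hult n hn⟩⟩, ?_⟩
  -- u tends to ω
  have hutend : Tendsto u atTop (𝓝 ω) := by
    rw [tendsto_order]
    constructor
    · intro b hb
      set t : ℝ := (b + ω) / 2 with ht
      have htb : b < t := by rw [ht]; linarith
      have htω : t < ω := by rw [ht]; linarith
      have hGt : 0 < 1 - F t := by have := hlt1 t htω; linarith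
      obtain ⟨N₀, hN₀⟩ := eventually_atTop.1 (tendsto_one_div_atTop_nhds_zero_nat.eventually_lt_const hGt)
      filter_upwards [eventually_ge_atTop (max 2 (N₀ + 1))] with n hn
      have hn2 : 2 ≤ n := le_trans (le_max_left _ _) hn
      have hnN : N₀ + 1 ≤ n := le_trans (le_max_right _ _) hn
      have h1n : (1:ℝ)/n < 1 - F t := hN₀ n (by omega)
      have : t ≤ u n := by
        rw [hu n]
        refine le_csInf (hSne' n hn2) fun s hs => ?_
        simp only [Set.mem_setOf_eq] at hs
        by_contra hst
        push_neg at hst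
        have := hmono hst.le
        linarith
      linarith
    · intro b hb
      filter_upwards [eventually_ge_atTop 2] with n hn
      exact lt_trans (hult n hn) hb
  have hatend : Tendsto (fun n => ω - u n) atTop (𝓝[>] (0:ℝ)) := by
    rw [tendsto_nhdsWithin_iff]
    constructor
    · have h0 : Tendsto (fun n => ω - u n) atTop (𝓝 (ω - ω)) := hutend.const_sub ω
      rwa [sub_self] at h0
    · filter_upwards [eventually_ge_atTop 2] with n hn
      exact Set.mem_Ioi.2 (by have := hult n hn; linarith)
  -- G(u n) ≤ 1/n
  have hG_top : ∀ n : ℕ, 2 ≤ n → 1 - F (u n) ≤ 1 / n := by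
    intro n hn
    have hIoi : ∀ t, u n < t → 1 - F t < 1/n := by
      intro t ht
      rw [hu n] at ht
      obtain ⟨s, hs, hst⟩ := exists_lt_of_csInf_lt (hSne' n hn) ht
      simp only [Set.mem_setOf_eq] at hs
      have := hmono hst.le
      linarith
    have h1 : Tendsto F (𝓝[>] (u n)) (𝓝 (F (u n))) :=
      (hrc (u n)).mono_left (nhdsWithin_mono _ Set.Ioi_subset_Ici_self)
    have h2 : 1 - 1/n ≤ F (u n) := by
      refine ge_of_tendsto h1 ?_
      filter_upwards [self_mem_nhdsWithin] with t ht
      have := hIoi t ht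
      linarith
    linarith
  -- 1/n ≤ G t for t < u n
  have hG_bot : ∀ n : ℕ, 2 ≤ n → ∀ t, t < u n → 1 / (n:ℝ) ≤ 1 - F t := by
    intro n hn t ht
    by_contra h
    push_neg at h
    have : u n ≤ t := (hu n) ▸ csInf_le (hSbdd n hn) h
    linarith
  -- ratio tendsto
  have hR : ∀ c : ℝ, 0 < c →
      Tendsto (fun n => (1 - F (ω - c * (ω - u n))) / (1 - F (u n))) atTop (𝓝 (c ^ α)) := by
    intro c hc
    have := (hrv c hc).comp hatend
    refine this.congr fun n => ?_
    simp only [Function.comp]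
    rw [sub_sub_cancel]
  -- n * G(u n) → 1
  have hnG1 : Tendsto (fun n : ℕ => (n:ℝ) * (1 - F (u n))) atTop (𝓝 1) := by
    rw [tendsto_order]
    constructor
    · intro b hb
      rcases le_or_gt b 0 with hb0 | hb0
      · filter_upwards [eventually_ge_atTop 2] with n hn
        have hG : 0 < 1 - F (u n) := by have := hlt1 (u n) (hult n hn); linarith
        have hn0 : (0:ℝ) < n := by positivity
        nlinarith
      · -- choose c > 1 with b < (c^α)⁻¹
        set c : ℝ := b ^ (-(1/(2*α))) with hc
        have hb1 : b < 1 := hb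
        have hc1 : 1 < c := by
          rw [hc, Real.one_lt_rpow_iff_of_pos hb0]
          right
          constructor
          · exact hb1
          · rw [neg_lt, neg_zero]; positivity
        have hcα : c ^ α = b ^ (-(1/2) : ℝ) := by
          rw [hc, ← Real.rpow_mul hb0.le]
          congr 1
          field_simp
        have hinv : (c ^ α)⁻¹ = b ^ ((1/2) : ℝ) := by
          rw [hcα, ← Real.rpow_neg hb0.le, neg_neg]
        have hbinv : b < (c ^ α)⁻¹ := by
          rw [hinv]
          nth_rewrite 1 [← Real.rpow_one b]
          exact Real.rpow_lt_rpow_of_exponent_gt hb0 hb1 (by norm_num)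
        have hcα0 : (0:ℝ) < c ^ α := Real.rpow_pos_of_pos (by linarith) α
        have hRinv : Tendsto (fun n => ((1 - F (ω - c * (ω - u n))) / (1 - F (u n)))⁻¹)
            atTop (𝓝 (c ^ α)⁻¹) := (hR c (by linarith)).inv₀ hcα0.ne'
        filter_upwards [hRinv.eventually_const_lt hbinv, eventually_ge_atTop 2] with n hrn hn
        set v : ℝ := ω - c * (ω - u n) with hv
        have hun : u n < ω := hult n hn
        have hvu : v < u n := by
          rw [hv]
          nlinarith
        have hvω : v < ω := lt_trans hvu hun
        have hGv : 0 < 1 - F v := by have := hlt1 v hvω; linarith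
        have hGu : 0 < 1 - F (u n) := by have := hlt1 (u n) hun; linarith
        have hnGv : 1 ≤ (n:ℝ) * (1 - F v) := by
          have h1 := hG_bot n hn v hvu
          have hn0 : (0:ℝ) < n := by positivity
          rw [div_le_iff₀ hn0] at h1
          rw [mul_comm (n:ℝ)]
          exact h1
        have hratio_inv : ((1 - F v) / (1 - F (u n)))⁻¹ = (1 - F (u n)) / (1 - F v) := by
          rw [inv_div]
        rw [hratio_inv] at hrn
        calc b < (1 - F (u n)) / (1 - F v) := hrn
        _ ≤ ((n:ℝ) * (1 - F v)) * ((1 - F (u n)) / (1 - F v)) :=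
            le_mul_of_one_le_left (by positivity) hnGv
        _ = (n:ℝ) * (1 - F (u n)) := by field_simp
    · intro b hb
      filter_upwards [eventually_ge_atTop 2] with n hn
      have hn0 : (0:ℝ) < n := by positivity
      calc (n:ℝ) * (1 - F (u n)) ≤ (n:ℝ) * (1/n) :=
          mul_le_mul_of_nonneg_left (hG_top n hn) hn0.le
      _ = 1 := by field_simp
      _ < b := hb
  -- key limit
  have hkey : ∀ c : ℝ, 0 < c →
      Tendsto (fun n : ℕ => (n:ℝ) * (1 - F (ω - c * (ω - u n)))) atTop (𝓝 (c ^ α)) := by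
    intro c hc
    have hmul := (hR c hc).mul hnG1
    rw [mul_one] at hmul
    refine hmul.congr' ?_
    filter_upwards [eventually_ge_atTop 2] with n hn
    have hGu : 0 < 1 - F (u n) := by have := hlt1 (u n) (hult n hn); linarith
    field_simp
  -- final convergence
  intro x
  rcases lt_trichotomy x 0 with hx | hx | hx
  · -- x < 0
    set c : ℝ := -x with hc
    have hc0 : 0 < c := by rw [hc]; linarith
    have h1 := hkey c hc0
    have h2 : Tendsto (fun n : ℕ => max (1 - (n:ℝ) * (1 - F (ω - c * (ω - u n)))) 0)
        atTop (𝓝 (max (1 - c ^ α) 0)) :=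
      (((continuous_const.sub continuous_id).max continuous_const).continuousAt).tendsto.comp h1
    have heq : ∀ n : ℕ, freePow F n ((ω - u n) * x + ω)
        = max (1 - (n:ℝ) * (1 - F (ω - c * (ω - u n)))) 0 := by
      intro n
      rw [freePow, show (ω - u n) * x + ω = ω - c * (ω - u n) by rw [hc]; ring]
      congr 1
      ring
    have hbeta : betaDF α x = max (1 - c ^ α) 0 := by
      rcases le_or_gt x (-1) with hx1 | hx1
      · have hc1 : 1 ≤ c := by rw [hc]; linarith
        have : 1 ≤ c ^ α := Real.one_le_rpow hc1 hα.le
        rw [betaDF, if_pos hx1, max_eq_right (by linarith)]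
      · have hc1 : c ≤ 1 := by rw [hc]; linarith
        have : c ^ α ≤ 1 := Real.rpow_le_one hc0.le hc1 hα.le
        rw [betaDF, if_neg (by linarith), if_pos hx.le, max_eq_left (by linarith),
          abs_of_neg hx]
    rw [hbeta]
    exact h2.congr fun n => (heq n).symm
  · -- x = 0
    subst hx
    have : (fun n : ℕ => freePow F n ((ω - u n) * 0 + ω)) = fun _ => 1 := by
      funext n
      rw [mul_zero, zero_add, freePow, hFω, mul_one,
        show (n:ℝ) - ((n:ℝ) - 1) = 1 by ring]
      exact max_eq_left zero_le_one
    rw [this]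
    have : betaDF α 0 = 1 := by
      rw [betaDF, if_neg (by norm_num), if_pos le_rfl, abs_zero, Real.zero_rpow hα.ne']
      norm_num
    rw [this]
    exact tendsto_const_nhds
  · -- x > 0
    have hbeta : betaDF α x = 1 := by
      rw [betaDF, if_neg (by linarith), if_neg (by linarith)]
    rw [hbeta]
    refine tendsto_const_nhds.congr' ?_
    filter_upwards [eventually_ge_atTop 2] with n hn
    have hun : u n < ω := hult n hn
    have hgt : ω < (ω - u n) * x + ω := by nlinarith
    rw [freePow, hgt1 _ hgt, mul_one, show (n:ℝ) - ((n:ℝ) - 1) = 1 by ring,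
      max_eq_left zero_le_one]
end
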